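/- arXiv:1904.02337 — 3 statements merged into one kernel-verified Lean document; each statement's English description precedes it below -/
import Mathlib

section
/- Fix integers d ≥ 1, n ≥ 2 and dyadic lengths l > s. Let E ⊆ [0,1)^d be a nonempty union of cubes of B_l^d, and let G ⊆ ℝ^{dn} be a nonempty union of cubes of B_s^{dn} such that (l/s)^d ≤ #B_s^{dn}(G) ≤ (1/2)(l/s)^{dn}. Then there exist a dyadic length r with s ≤ r ≤ l and Q ≤ r ≤ 4Q, where Q = (l^{−d} s^{dn} · #B_s^{dn}(G))^{1/(d(n−1))}, and a nonempty set F ⊆ E that is a union of cubes of B_s^d, satisfying: (1) Avoidance: for any pairwise distinct cubes J_1, …, J_n ∈ B_s^d(F), the cube J_1 × ⋯ × J_n does not belong to B_s^{dn}(G); (2) Non-concentration: every cube I' ∈ B_r^d(E) contains at most one cube of B_s^d(F); (3) Large size: for every I ∈ B_l^d(E), #B_s^d(F ∩ I) ≥ (1/2)(l/r)^d. -/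
/-!
Pick a dyadic scale `r ∈ [Q, 4Q]` that is either `l` or larger than `2Q`; in both cases
`2 #B_s(G) ≤ m^{dn} p^d`, where `r = s m` and `l = r p`. Choose one `s`-subcube in each `r`-cube
of `E`. For a cube of `G` with pairwise distinct factors, only a proportion `m^{-dn}` of the
choices selects all `n` factors, so some choice selects all factors of at most
`#B_s(G) m^{-dn} ≤ p^d / 2` such cubes. Removing the first factor of each of them leaves a set `F`
avoiding `G`, and each `l`-cube of `E` keeps at least half of its `p^d` chosen subcubes.
-/

open Filter Set

noncomputable section

/-- A dyadic length: a real number of the form `2 ^ (-k)` for a natural number `k`. -/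
def IsDyadicLength (l : ℝ) : Prop := ∃ k : ℕ, l = (2 : ℝ) ^ (-(k : ℤ))

/-- The half-open dyadic cube of sidelength `l` with corner `l • m`. -/
def dyadicCube {ι : Type*} (l : ℝ) (m : ι → ℤ) : Set (ι → ℝ) :=
  {x | ∀ i, l * (m i : ℝ) ≤ x i ∧ x i < l * ((m i : ℝ) + 1)}

/-- The (indices of the) cubes of `B_l` that intersect `E`. -/
def cubesMeeting {ι : Type*} (l : ℝ) (E : Set (ι → ℝ)) : Set (ι → ℤ) :=
  {m | (dyadicCube l m ∩ E).Nonempty}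

/-- `#B_l(E)`, the number of cubes of sidelength `l` meeting `E`. -/
def cubeCount {ι : Type*} (l : ℝ) (E : Set (ι → ℝ)) : ℕ :=
  (cubesMeeting l E).ncard

/-- `E` is a union of cubes of `B_l`. -/
def IsCubeUnion {ι : Type*} (l : ℝ) (E : Set (ι → ℝ)) : Prop :=
  ∃ S : Set (ι → ℤ), E = ⋃ m ∈ S, dyadicCube l m

/-- Lower Minkowski dimension, computed along dyadic scales. -/
def lowerMinkDim {ι : Type*} (Z : Set (ι → ℝ)) : ℝ :=
  Filter.atTop.liminf fun k : ℕ =>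
    Real.log (cubeCount ((2 : ℝ) ^ (-(k : ℤ))) Z) / (k * Real.log 2)

/-- The unit cube `[0,1)^d`. -/
def unitCube (d : ℕ) : Set (Fin d → ℝ) := {x | ∀ i, x i ∈ Set.Ico (0 : ℝ) 1}

/-- `X^n`, viewed inside `ℝ^{dn} = (Fin n × Fin d → ℝ)`. -/
def nthPower {d n : ℕ} (X : Set (Fin d → ℝ)) : Set (Fin n × Fin d → ℝ) :=
  {y | ∀ j, (fun i => y (j, i)) ∈ X}

/-- The point `(x_1, …, x_n) ∈ ℝ^{dn}` built from `x_1, …, x_n ∈ ℝ^d`. -/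
def tuple {d n : ℕ} (x : Fin n → Fin d → ℝ) : Fin n × Fin d → ℝ := fun p => x p.1 p.2

/-- The `j`-th factor of a cube index in `B_l^{dn}`. -/
def cubeRow {d n : ℕ} (M : Fin n × Fin d → ℤ) (j : Fin n) : Fin d → ℤ := fun i => M (j, i)

/-- A cube of `B_l^{dn}` is strongly non-diagonal if its `n` factors are pairwise distinct. -/
def StronglyNonDiagonal {d n : ℕ} (M : Fin n × Fin d → ℤ) : Prop :=
  Function.Injective (cubeRow M)

open Finset Function

section Selection

variable {α β : Type*} [Fintype α] [DecidableEq α] [Fintype β] [DecidableEq β]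

theorem card_filter_forall_mem_eq_mul_pow (S : Finset α) (f : α → β) :
    #{σ : α → β | ∀ a ∈ S, σ a = f a} * Fintype.card β ^ #S =
      Fintype.card β ^ Fintype.card α := by
  have hpi : ({σ : α → β | ∀ a ∈ S, σ a = f a} : Finset (α → β)) =
      Fintype.piFinset fun a => if a ∈ S then {f a} else univ := by
    ext σ
    simp only [mem_filter, Finset.mem_univ, true_and, Fintype.mem_piFinset]
    refine forall_congr' fun a => ?_
    split_ifs <;> simp_all
  simp only [hpi, Fintype.card_piFinset, apply_ite card, Finset.card_singleton, card_univ,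
    prod_ite, prod_const, one_pow, one_mul]
  rw [← pow_add, ← card_univ (α := α), ← card_filter_add_card_filter_not (s := univ) (· ∈ S),
    add_comm]
  simp

variable {Z γ : Type*} [DecidableEq Z] {n : ℕ}

theorem card_filter_forall_selected_mul_pow_le {sel : α → β → Z} (hsel : Injective2 sel)
    {z : Fin n → Z} (hz : Injective z) :
    #{σ : α → β | ∀ j, ∃ a, sel a (σ a) = z j} * Fintype.card β ^ n ≤
      Fintype.card β ^ Fintype.card α := by
  by_cases hhit : ∃ σ₀ : α → β, ∀ j, ∃ a, sel a (σ₀ a) = z j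
  swap
  · push Not at hhit
    rw [filter_false_of_mem fun σ _ => by simpa using hhit σ]
    simp
  obtain ⟨σ₀, hσ₀⟩ := hhit
  choose g hg using hσ₀
  have hg_inj : Injective g := fun j j' h => hz (by rw [← hg j, ← hg j', h])
  have hselected : ∀ σ : α → β,
      (∀ j, ∃ a, sel a (σ a) = z j) ↔ ∀ a ∈ Finset.univ.image g, σ a = σ₀ a := by
    intro σ
    simp only [Finset.mem_image, Finset.mem_univ, true_and, forall_exists_index,
      forall_apply_eq_imp_iff]
    refine forall_congr' fun j => ⟨?_, fun h => ⟨g j, by rw [h, hg j]⟩⟩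
    rintro ⟨a, ha⟩
    obtain ⟨rfl, h⟩ := hsel (ha.trans (hg j).symm)
    exact h
  have hcount := card_filter_forall_mem_eq_mul_pow (Finset.univ.image g) σ₀
  rw [Finset.card_image_of_injective _ hg_inj, card_univ, Fintype.card_fin] at hcount
  rw [filter_congr fun σ _ => hselected σ]
  exact hcount.le

theorem exists_card_filter_forall_selected_mul_pow_le [Nonempty β] {sel : α → β → Z}
    (hsel : Injective2 sel) (T : Finset γ) (row : γ → Fin n → Z)
    (hrow : ∀ x ∈ T, Injective (row x)) :
    ∃ σ : α → β, #{x ∈ T | ∀ j, ∃ a, sel a (σ a) = row x j} * Fintype.card β ^ n ≤ #T := by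
  have hsum : ∑ σ : α → β, #{x ∈ T | ∀ j, ∃ a, sel a (σ a) = row x j} * Fintype.card β ^ n ≤
      ∑ _σ : α → β, #T :=
    calc _ = ∑ x ∈ T, #{σ : α → β | ∀ j, ∃ a, sel a (σ a) = row x j} * Fintype.card β ^ n := by
          simp only [← sum_mul, card_filter]
          rw [sum_comm]
      _ ≤ ∑ _x ∈ T, Fintype.card β ^ Fintype.card α :=
          sum_le_sum fun x hx => card_filter_forall_selected_mul_pow_le hsel (hrow x hx)
      _ = ∑ _σ : α → β, #T := by simp [mul_comm]
  obtain ⟨σ, -, hσ⟩ := exists_le_of_sum_le univ_nonempty hsum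
  exact ⟨σ, hσ⟩

end Selection

section DyadicCubes

variable {ι : Type*} {s l : ℝ}

theorem mem_dyadicCube_iff_floor (hl : 0 < l) {m : ι → ℤ} {x : ι → ℝ} :
    x ∈ dyadicCube l m ↔ ∀ i, ⌊x i / l⌋ = m i := by
  refine forall_congr' fun i => ?_
  rw [Int.floor_eq_iff, le_div_iff₀ hl, div_lt_iff₀ hl, mul_comm l, mul_comm l]

theorem exists_mem_dyadicCube (hl : 0 < l) (x : ι → ℝ) : ∃ m, x ∈ dyadicCube l m :=
  ⟨fun i => ⌊x i / l⌋, (mem_dyadicCube_iff_floor hl).2 fun _ => rfl⟩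

theorem dyadicCube_nonempty (hl : 0 < l) (m : ι → ℤ) : (dyadicCube l m).Nonempty :=
  ⟨fun i => l * m i, fun _ => ⟨le_rfl, by linarith⟩⟩

theorem eq_of_mem_dyadicCube (hl : 0 < l) {m m' : ι → ℤ} {x : ι → ℝ}
    (h : x ∈ dyadicCube l m) (h' : x ∈ dyadicCube l m') : m = m' := by
  rw [mem_dyadicCube_iff_floor hl] at h h'
  exact funext fun i => (h i).symm.trans (h' i)

theorem dyadicCube_subset_dyadicCube_ediv (hs : 0 < s) {p : ℕ} (hp : 0 < p) (i : ι → ℤ) :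
    dyadicCube s i ⊆ dyadicCube (s * p) fun k => i k / (p : ℤ) := by
  intro x hx
  rw [mem_dyadicCube_iff_floor hs] at hx
  rw [mem_dyadicCube_iff_floor (by positivity)]
  intro k
  rw [← div_div, Int.floor_div_natCast, hx]

theorem dyadicCube_subset_dyadicCube_iff (hs : 0 < s) {p : ℕ} (hp : 0 < p) {i μ : ι → ℤ} :
    dyadicCube s i ⊆ dyadicCube (s * p) μ ↔ (fun k => i k / (p : ℤ)) = μ := by
  refine ⟨fun h => ?_, fun h => h ▸ dyadicCube_subset_dyadicCube_ediv hs hp i⟩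
  obtain ⟨x, hx⟩ := dyadicCube_nonempty hs i
  exact eq_of_mem_dyadicCube (by positivity) (dyadicCube_subset_dyadicCube_ediv hs hp i hx) (h hx)

theorem dyadicCube_subset_of_inter_nonempty (hs : 0 < s) {p : ℕ} (hp : 0 < p) {i μ : ι → ℤ}
    (h : (dyadicCube s i ∩ dyadicCube (s * p) μ).Nonempty) :
    dyadicCube s i ⊆ dyadicCube (s * p) μ := by
  obtain ⟨x, hxi, hxμ⟩ := h
  rw [dyadicCube_subset_dyadicCube_iff hs hp]
  exact eq_of_mem_dyadicCube (by positivity) (dyadicCube_subset_dyadicCube_ediv hs hp i hxi) hxμ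

theorem cubesMeeting_iUnion_inter (hs : 0 < s) {p : ℕ} (hp : 0 < p) (S : Set (ι → ℤ))
    (μ : ι → ℤ) :
    cubesMeeting s ((⋃ i ∈ S, dyadicCube s i) ∩ dyadicCube (s * p) μ) =
      {i ∈ S | dyadicCube s i ⊆ dyadicCube (s * p) μ} := by
  ext i
  constructor
  · rintro ⟨x, hxi, hxS, hxμ⟩
    obtain ⟨i', hi', hxi'⟩ := mem_iUnion₂.1 hxS
    rw [eq_of_mem_dyadicCube hs hxi hxi']
    exact ⟨hi', dyadicCube_subset_of_inter_nonempty hs hp ⟨x, hxi', hxμ⟩⟩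
  · rintro ⟨hi, hiμ⟩
    obtain ⟨x, hx⟩ := dyadicCube_nonempty hs i
    exact ⟨x, hx, mem_iUnion₂.2 ⟨i, hi, hx⟩, hiμ hx⟩

theorem cubesMeeting_iUnion (hs : 0 < s) (S : Set (ι → ℤ)) :
    cubesMeeting s (⋃ i ∈ S, dyadicCube s i) = S := by
  ext i
  refine ⟨fun ⟨x, hxi, hxS⟩ => ?_, fun hi => ?_⟩
  · obtain ⟨i', hi', hxi'⟩ := mem_iUnion₂.1 hxS
    rwa [eq_of_mem_dyadicCube hs hxi hxi']
  · obtain ⟨x, hx⟩ := dyadicCube_nonempty hs i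
    exact ⟨x, hx, mem_iUnion₂.2 ⟨i, hi, hx⟩⟩

theorem dyadicCube_subset_of_mem_cubesMeeting (hs : 0 < s) {p : ℕ} (hp : 0 < p)
    {E : Set (ι → ℝ)} (hE : IsCubeUnion (s * p) E) {i : ι → ℤ} (hi : i ∈ cubesMeeting s E) :
    dyadicCube s i ⊆ E := by
  obtain ⟨S, rfl⟩ := hE
  obtain ⟨x, hxi, hxE⟩ := hi
  obtain ⟨μ, hμ, hxμ⟩ := mem_iUnion₂.1 hxE
  exact (dyadicCube_subset_of_inter_nonempty hs hp ⟨x, hxi, hxμ⟩).trans 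
    (subset_iUnion₂ (s := fun μ _ => dyadicCube (s * p) μ) μ hμ)

theorem cubesMeeting_finite_of_subset_unitCube {d : ℕ} (hl : 0 < l) {E : Set (Fin d → ℝ)}
    (hE : E ⊆ unitCube d) : (cubesMeeting l E).Finite := by
  refine (Set.finite_Icc (0 : Fin d → ℤ) fun _ => ⌊1 / l⌋).subset ?_
  rintro m ⟨x, hxm, hxE⟩
  rw [mem_dyadicCube_iff_floor hl] at hxm
  refine ⟨fun i => ?_, fun i => ?_⟩ <;> rw [← hxm i] <;> obtain ⟨h0, h1⟩ := hE hxE i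
  · exact Int.floor_nonneg.2 (div_nonneg h0 hl.le)
  · exact Int.floor_le_floor (div_le_div_of_nonneg_right h1.le hl.le)

/-- The subcube of `dyadicCube l μ` at scale `l / p` with offset `u`. -/
def dyadicChild (p : ℕ) (μ : ι → ℤ) (u : ι → Fin p) : ι → ℤ := fun k => p * μ k + u k

theorem dyadicChild_ediv {p : ℕ} (μ : ι → ℤ) (u : ι → Fin p) :
    (fun k => dyadicChild p μ u k / (p : ℤ)) = μ := by
  funext k
  have hp : (p : ℤ) ≠ 0 := by exact_mod_cast (u k).pos.ne'
  rw [dyadicChild, add_comm, mul_comm, Int.add_mul_ediv_right _ _ hp,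
    Int.ediv_eq_zero_of_lt (by positivity) (by exact_mod_cast (u k).isLt), zero_add]

theorem injective2_dyadicChild (p : ℕ) :
    Function.Injective2 (dyadicChild p : (ι → ℤ) → (ι → Fin p) → ι → ℤ) := by
  intro μ μ' u u' h
  obtain rfl : μ = μ' := by rw [← dyadicChild_ediv μ u, ← dyadicChild_ediv μ' u', h]
  refine ⟨rfl, funext fun k => Fin.ext ?_⟩
  have := congrFun h k
  simp only [dyadicChild] at this
  omega

theorem dyadicCube_dyadicChild_subset (hs : 0 < s) {p : ℕ} (hp : 0 < p) (μ : ι → ℤ)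
    (u : ι → Fin p) : dyadicCube s (dyadicChild p μ u) ⊆ dyadicCube (s * p) μ :=
  (dyadicCube_subset_dyadicCube_iff hs hp).2 (dyadicChild_ediv μ u)

theorem dyadicChild_mem_cubesMeeting (hs : 0 < s) {p : ℕ} (hp : 0 < p) {E : Set (ι → ℝ)}
    (hE : IsCubeUnion (s * p) E) {μ : ι → ℤ} (hμ : μ ∈ cubesMeeting (s * p) E)
    (u : ι → Fin p) : dyadicChild p μ u ∈ cubesMeeting s E := by
  have hμE : dyadicCube (s * p) μ ⊆ E :=
    dyadicCube_subset_of_mem_cubesMeeting (p := 1) (by positivity) one_pos (by simpa using hE) hμ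
  obtain ⟨x, hx⟩ := dyadicCube_nonempty hs (dyadicChild p μ u)
  exact ⟨x, hx, hμE (dyadicCube_dyadicChild_subset hs hp μ u hx)⟩

end DyadicCubes

section Avoidance

variable {ι : Type*} {s : ℝ} {m p : ℕ} {R : Finset (ι → ℤ)}

def selectedChildren (σ : R → ι → Fin m) : Set (ι → ℤ) :=
  range fun a : R => dyadicChild m a (σ a)

theorem finite_selectedChildren (σ : R → ι → Fin m) : (selectedChildren σ).Finite :=
  Set.finite_range _

theorem eq_of_mem_selectedChildren (hs : 0 < s) (hm : 0 < m) {σ : R → ι → Fin m}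
    {ρ i₁ i₂ : ι → ℤ} (h₁ : i₁ ∈ selectedChildren σ) (h₂ : i₂ ∈ selectedChildren σ)
    (hρ₁ : dyadicCube s i₁ ⊆ dyadicCube (s * m) ρ) (hρ₂ : dyadicCube s i₂ ⊆ dyadicCube (s * m) ρ) :
    i₁ = i₂ := by
  obtain ⟨a₁, rfl⟩ := h₁
  obtain ⟨a₂, rfl⟩ := h₂
  rw [dyadicCube_subset_dyadicCube_iff hs hm, dyadicChild_ediv] at hρ₁ hρ₂
  obtain rfl : a₁ = a₂ := Subtype.ext (hρ₁.trans hρ₂.symm)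
  rfl

variable [Fintype ι] [DecidableEq ι]

theorem card_pow_le_two_mul_cubeCount_selectedChildren (hs : 0 < s) (hm : 0 < m) (hp : 0 < p)
    (σ : R → ι → Fin m) {D : Finset (ι → ℤ)} (hD : 2 * #D ≤ p ^ Fintype.card ι) {μ : ι → ℤ}
    (hμ : ∀ u, dyadicChild p μ u ∈ R) :
    p ^ Fintype.card ι ≤ 2 * cubeCount s
      ((⋃ i ∈ selectedChildren σ \ D, dyadicCube s i) ∩ dyadicCube (s * m * p) μ) := by
  set f : (ι → Fin p) → ι → ℤ := fun u => dyadicChild m (dyadicChild p μ u) (σ ⟨_, hμ u⟩)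
  have hf : Injective f := fun u u' h =>
    (injective2_dyadicChild p (injective2_dyadicChild m h).1).2
  set A := {i ∈ selectedChildren σ \ D | dyadicCube s i ⊆ dyadicCube (s * m * p) μ}
  have hsub : range f \ D ⊆ A := by
    rintro _ ⟨⟨u, rfl⟩, hfD⟩
    exact ⟨⟨⟨⟨_, hμ u⟩, rfl⟩, hfD⟩, (dyadicCube_dyadicChild_subset hs hm _ _).trans
      (dyadicCube_dyadicChild_subset (by positivity) hp μ u)⟩
  have hA : A.Finite := (finite_selectedChildren σ).subset fun i hi => hi.1.1
  have hcount : p ^ Fintype.card ι ≤ A.ncard + #D :=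
    calc p ^ Fintype.card ι = (range f).ncard := by simp [Set.ncard_range_of_injective hf]
      _ ≤ (range f \ D).ncard + (D : Set (ι → ℤ)).ncard :=
          Set.ncard_le_ncard_sdiff_add_ncard _ _ D.finite_toSet
      _ ≤ A.ncard + #D := by rw [Set.ncard_coe_finset]; gcongr
  rw [cubeCount, mul_assoc s, ← Nat.cast_mul, cubesMeeting_iUnion_inter hs (Nat.mul_pos hm hp),
    Nat.cast_mul, ← mul_assoc]
  change _ ≤ 2 * A.ncard
  omega

theorem exists_two_mul_card_filter_selected_le {n : ℕ} (hm : 0 < m)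
    (T : Finset (Fin n × ι → ℤ)) (hT : ∀ M ∈ T, Injective (Function.curry M))
    (hkey : 2 * #T ≤ m ^ (Fintype.card ι * n) * p ^ Fintype.card ι) :
    ∃ σ : R → ι → Fin m,
      2 * #{M ∈ T | ∀ j, ∃ a : R, dyadicChild m a (σ a) = Function.curry M j} ≤
        p ^ Fintype.card ι := by
  have : Nonempty (ι → Fin m) := ⟨fun _ => ⟨0, hm⟩⟩
  obtain ⟨σ, hσ⟩ := exists_card_filter_forall_selected_mul_pow_le (α := R)
    (sel := fun a => dyadicChild m a)
    (fun a a' u u' h => (injective2_dyadicChild m h).imp_left Subtype.ext) T Function.curry hT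
  refine ⟨σ, Nat.le_of_mul_le_mul_right ?_ (by positivity : 0 < m ^ (Fintype.card ι * n))⟩
  simp only [Fintype.card_fun, Fintype.card_fin, ← pow_mul] at hσ
  calc _ = 2 * (#{M ∈ T | ∀ j, ∃ a : R, dyadicChild m a (σ a) = Function.curry M j} *
        m ^ (Fintype.card ι * n)) := mul_assoc _ _ _
    _ ≤ 2 * #T := by gcongr
    _ ≤ _ := hkey.trans_eq (mul_comm _ _)

theorem exists_avoiding_subset {n : ℕ} (hn : 0 < n) (hs : 0 < s) (hm : 0 < m) (hp : 0 < p)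
    {E : Set (ι → ℝ)} (hE : E.Nonempty) (hEfin : (cubesMeeting (s * m) E).Finite)
    (hEu : IsCubeUnion (s * m * p) E) {G : Set (Fin n × ι → ℝ)} (hG : (cubesMeeting s G).Finite)
    (hkey : 2 * cubeCount s G ≤ m ^ (Fintype.card ι * n) * p ^ Fintype.card ι) :
    ∃ F : Set (ι → ℝ), F.Nonempty ∧ F ⊆ E ∧ IsCubeUnion s F ∧
      (∀ x : Fin n → ι → ℤ, (∀ j, x j ∈ cubesMeeting s F) → Injective x →
        Function.uncurry x ∉ cubesMeeting s G) ∧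
      (∀ ρ ∈ cubesMeeting (s * m) E, ∀ i₁ ∈ cubesMeeting s F, ∀ i₂ ∈ cubesMeeting s F,
        dyadicCube s i₁ ⊆ dyadicCube (s * m) ρ → dyadicCube s i₂ ⊆ dyadicCube (s * m) ρ →
          i₁ = i₂) ∧
      ∀ μ ∈ cubesMeeting (s * m * p) E,
        p ^ Fintype.card ι ≤ 2 * cubeCount s (F ∩ dyadicCube (s * m * p) μ) := by
  set R := hEfin.toFinset
  set T := hG.toFinset.filter fun M => Injective (Function.curry M)
  have hT : #T ≤ cubeCount s G := by
    rw [cubeCount, Set.ncard_eq_toFinset_card _ hG]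
    exact card_filter_le _ _
  obtain ⟨σ, hσ⟩ := exists_two_mul_card_filter_selected_le (R := R) hm T
    (fun M hM => (Finset.mem_filter.1 hM).2) ((Nat.mul_le_mul_left 2 hT).trans hkey)
  set B := {M ∈ T | ∀ j, ∃ a : R, dyadicChild m a (σ a) = Function.curry M j}
  set D := B.image fun M => Function.curry M ⟨0, hn⟩
  set S := selectedChildren σ \ D
  set F := ⋃ i ∈ S, dyadicCube s i
  have hFS : cubesMeeting s F = S := cubesMeeting_iUnion hs S
  have hlarge : ∀ μ ∈ cubesMeeting (s * m * p) E,
      p ^ Fintype.card ι ≤ 2 * cubeCount s (F ∩ dyadicCube (s * m * p) μ) := fun μ hμ =>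
    card_pow_le_two_mul_cubeCount_selectedChildren hs hm hp σ
      ((Nat.mul_le_mul_left 2 card_image_le).trans hσ) fun u =>
        hEfin.mem_toFinset.2 (dyadicChild_mem_cubesMeeting (by positivity) hp hEu hμ u)
  refine ⟨F, ?_, ?_, ⟨S, rfl⟩, ?_, ?_, hlarge⟩
  · obtain ⟨x, hx⟩ := hE
    obtain ⟨μ, hxμ⟩ := exists_mem_dyadicCube (by positivity : 0 < s * m * p) x
    have hμ : 0 < cubeCount s (F ∩ dyadicCube (s * m * p) μ) := by
      have := hlarge μ ⟨x, hxμ, hx⟩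
      have := pow_pos hp (Fintype.card ι)
      omega
    obtain ⟨i, y, -, hy, -⟩ := Set.nonempty_of_ncard_ne_zero hμ.ne'
    exact ⟨y, hy⟩
  · refine iUnion₂_subset fun i hi => ?_
    obtain ⟨⟨a, rfl⟩, -⟩ := hi
    have h1 := dyadicCube_dyadicChild_subset hs hm (a : ι → ℤ) (σ a)
    have h2 := dyadicCube_subset_of_mem_cubesMeeting (by positivity : 0 < s * m) hp hEu
      (hEfin.mem_toFinset.1 a.2)
    exact h1.trans h2
  · intro x hx hinj hxG
    rw [hFS] at hx
    have hbad : Function.uncurry x ∈ B :=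
      Finset.mem_filter.2 ⟨Finset.mem_filter.2 ⟨hG.mem_toFinset.2 hxG, by simpa using hinj⟩,
        fun j => (hx j).1⟩
    exact (hx ⟨0, hn⟩).2 (Finset.mem_image.2 ⟨_, hbad, rfl⟩)
  · intro ρ _ i₁ h₁ i₂ h₂
    rw [hFS] at h₁ h₂
    exact eq_of_mem_selectedChildren hs hm h₁.1 h₂.1

end Avoidance

section Scales

variable {l r s Q : ℝ}

theorem IsDyadicLength.pos (hl : IsDyadicLength l) : 0 < l := by
  obtain ⟨k, rfl⟩ := hl
  positivity

theorem IsDyadicLength.le_one (hl : IsDyadicLength l) : l ≤ 1 := by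
  obtain ⟨k, rfl⟩ := hl
  exact zpow_le_one_of_nonpos₀ one_le_two (by omega)

theorem IsDyadicLength.exists_nat_mul_eq (hs : IsDyadicLength s) (hr : IsDyadicLength r)
    (hsr : s ≤ r) : ∃ m : ℕ, 0 < m ∧ r = s * m := by
  obtain ⟨b, rfl⟩ := hs
  obtain ⟨c, rfl⟩ := hr
  have hcb : c ≤ b := by
    have := (zpow_le_zpow_iff_right₀ one_lt_two).1 hsr
    omega
  refine ⟨2 ^ (b - c), by positivity, ?_⟩
  rw [Nat.cast_pow, Nat.cast_ofNat, ← zpow_natCast, ← zpow_add₀ two_ne_zero]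
  congr 1
  omega

theorem exists_isDyadicLength_between (hl : IsDyadicLength l) (hQ : 0 < Q) (hQl : Q ≤ l) :
    ∃ r, IsDyadicLength r ∧ Q ≤ r ∧ r ≤ l ∧ r ≤ 4 * Q ∧ (r = l ∨ 2 * Q < r) := by
  set t := Int.log 2 (4 * Q)
  have ht : (2 : ℝ) ^ t ≤ 4 * Q := by
    simpa using Int.zpow_log_le_self (b := 2) one_lt_two (by positivity : 0 < 4 * Q)
  have ht' : 4 * Q < 2 * 2 ^ t := by
    have := Int.lt_zpow_succ_log_self (b := 2) one_lt_two (4 * Q)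
    rw [Nat.cast_ofNat, zpow_add_one₀ two_ne_zero] at this
    linarith
  by_cases hlt : l ≤ 2 ^ t
  · exact ⟨l, hl, hQl, le_rfl, hlt.trans ht, Or.inl rfl⟩
  push Not at hlt
  have htneg : t < 0 := (zpow_lt_one_iff_right₀ one_lt_two).1 (hlt.trans_le hl.le_one)
  refine ⟨2 ^ t, ⟨(-t).toNat, ?_⟩, by linarith, hlt.le, ht, Or.inr (by linarith)⟩
  rw [Int.toNat_of_nonneg (by omega), neg_neg]

theorem exists_dyadic_scale {d k : ℕ} (hk : k ≠ 0) {N : ℝ} (hl : IsDyadicLength l)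
    (hs : IsDyadicLength s) (hlow : (l / s) ^ d ≤ N) (hhigh : N ≤ 1 / 2 * (l / s) ^ (d + k)) :
    ∃ m p : ℕ, 0 < m ∧ 0 < p ∧ IsDyadicLength (s * m) ∧ l = s * m * p ∧
      (s ^ (d + k) * N / l ^ d) ^ ((k : ℝ)⁻¹) ≤ s * m ∧
      s * m ≤ 4 * (s ^ (d + k) * N / l ^ d) ^ ((k : ℝ)⁻¹) ∧
      2 * N ≤ m ^ (d + k) * p ^ d := by
  have hl0 := hl.pos
  have hs0 := hs.pos
  have hN : 0 < N := (by positivity : 0 < (l / s) ^ d).trans_le hlow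
  set X := s ^ (d + k) * N / l ^ d
  have hX : 0 < X := by positivity
  have hk0 : (0 : ℝ) < k := by positivity
  have hQX : (X ^ (k : ℝ)⁻¹) ^ k = X := Real.rpow_inv_natCast_pow hX.le hk
  have hsQ : s ≤ X ^ (k : ℝ)⁻¹ := by
    rw [Real.le_rpow_inv_iff_of_pos hs0.le hX.le hk0, Real.rpow_natCast,
      le_div_iff₀ (by positivity)]
    rw [div_pow, div_le_iff₀ (by positivity)] at hlow
    calc s ^ k * l ^ d ≤ s ^ k * (N * s ^ d) := by gcongr
      _ = s ^ (d + k) * N := by ring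
  have hQl : X ^ (k : ℝ)⁻¹ ≤ l := by
    rw [Real.rpow_inv_le_iff_of_pos hX.le hl0.le hk0, Real.rpow_natCast,
      div_le_iff₀ (by positivity)]
    calc s ^ (d + k) * N ≤ s ^ (d + k) * (l / s) ^ (d + k) := by
          gcongr
          linarith [(by positivity : 0 ≤ (l / s) ^ (d + k))]
      _ = l ^ k * l ^ d := by rw [div_pow, mul_div_cancel₀ _ (by positivity)]; ring
  obtain ⟨r, hr, hQr, hrl, hr4Q, hcase⟩ :=
    exists_isDyadicLength_between hl (by positivity) hQl
  obtain ⟨m, hm, rfl⟩ := hs.exists_nat_mul_eq hr (hsQ.trans hQr)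
  obtain ⟨p, hp, rfl⟩ := hr.exists_nat_mul_eq hl hrl
  refine ⟨m, p, hm, hp, hr, rfl, hQr, hr4Q, ?_⟩
  rcases hcase with hlr | h2Q
  · have hp1 : (p : ℝ) = 1 := by
      refine (mul_left_cancel₀ (by positivity : s * m ≠ 0) ?_).symm
      rw [mul_one]
      exact hlr
    calc 2 * N ≤ (s * m * p / s) ^ (d + k) := by linarith
      _ = m ^ (d + k) * p ^ d := by rw [hp1, one_pow, mul_one]; field_simp
  · have h2X : 2 * X ≤ (s * m) ^ k :=
      calc 2 * X ≤ 2 ^ k * X := by gcongr; exact le_self_pow₀ one_le_two hk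
        _ = (2 * X ^ (k : ℝ)⁻¹) ^ k := by rw [mul_pow, hQX]
        _ ≤ (s * m) ^ k := by gcongr
    have : 2 * N * s ^ (d + k) ≤ m ^ (d + k) * p ^ d * s ^ (d + k) :=
      calc 2 * N * s ^ (d + k) = 2 * X * (s * m * p) ^ d := by simp only [X]; field_simp
        _ ≤ (s * m) ^ k * (s * m * p) ^ d := by gcongr
        _ = m ^ (d + k) * p ^ d * s ^ (d + k) := by ring
    exact le_of_mul_le_mul_right this (by positivity)

end Scales

theorem rpow_scale_eq_rpow_natCast_inv {d n : ℕ} (hn : 1 ≤ n) {l : ℝ} (hl : 0 < l) (s N : ℝ) :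
    (l ^ (-(d : ℝ)) * s ^ ((d : ℝ) * n) * N) ^ (1 / ((d : ℝ) * ((n : ℝ) - 1))) =
      (s ^ (d * n) * N / l ^ d) ^ (((d * (n - 1) : ℕ) : ℝ)⁻¹) := by
  congr 1
  · rw [Real.rpow_neg hl.le, Real.rpow_natCast, ← Nat.cast_mul, Real.rpow_natCast]
    ring
  · push_cast [Nat.cast_sub hn]
    rw [one_div]

theorem discrete_avoidance_general (d n : ℕ) (hd : 1 ≤ d) (hn : 2 ≤ n)
    (l s : ℝ) (hl : IsDyadicLength l) (hs : IsDyadicLength s)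
    (E : Set (Fin d → ℝ)) (hE0 : E.Nonempty) (hE1 : E ⊆ unitCube d)
    (hE2 : IsCubeUnion l E)
    (G : Set (Fin n × Fin d → ℝ))
    (hGlow : (l / s) ^ d ≤ (cubeCount s G : ℝ))
    (hGhigh : (cubeCount s G : ℝ) ≤ (1 / 2) * (l / s) ^ (d * n)) :
    ∃ r : ℝ, ∃ F : Set (Fin d → ℝ),
      IsDyadicLength r ∧ s ≤ r ∧ r ≤ l ∧
      (l ^ (-(d : ℝ)) * s ^ ((d : ℝ) * n) * (cubeCount s G : ℝ)) ^
          (1 / ((d : ℝ) * ((n : ℝ) - 1))) ≤ r ∧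
      r ≤ 4 * (l ^ (-(d : ℝ)) * s ^ ((d : ℝ) * n) * (cubeCount s G : ℝ)) ^
          (1 / ((d : ℝ) * ((n : ℝ) - 1))) ∧
      F.Nonempty ∧ F ⊆ E ∧ IsCubeUnion s F ∧
      -- (1) Avoidance
      (∀ m : Fin n → Fin d → ℤ, (∀ j, m j ∈ cubesMeeting s F) → Function.Injective m →
        (fun p : Fin n × Fin d => m p.1 p.2) ∉ cubesMeeting s G) ∧
      -- (2) Non-concentration
      (∀ m' ∈ cubesMeeting r E, ∀ m₁ ∈ cubesMeeting s F, ∀ m₂ ∈ cubesMeeting s F,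
        dyadicCube s m₁ ⊆ dyadicCube r m' → dyadicCube s m₂ ⊆ dyadicCube r m' → m₁ = m₂) ∧
      -- (3) Large size
      (∀ m ∈ cubesMeeting l E,
        (1 / 2) * (l / r) ^ d ≤ (cubeCount s (F ∩ dyadicCube l m) : ℝ)) := by
  have hdn : d * n = d + d * (n - 1) := by
    rw [Nat.mul_sub_one, Nat.add_sub_cancel' (Nat.le_mul_of_pos_right d (by omega))]
  have hl0 := hl.pos
  have hs0 := hs.pos
  have hG : (cubesMeeting s G).Finite := Set.finite_of_ncard_pos <| by
    have : (0 : ℝ) < cubeCount s G := (by positivity : (0 : ℝ) < (l / s) ^ d).trans_le hGlow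
    exact_mod_cast this
  rw [rpow_scale_eq_rpow_natCast_inv (by omega) hl0, hdn]
  rw [hdn] at hGhigh
  obtain ⟨m, p, hm, hp, hr, rfl, hQr, hr4Q, hkey⟩ :=
    exists_dyadic_scale (Nat.mul_ne_zero (by omega) (by omega)) hl hs hGlow hGhigh
  obtain ⟨F, hF0, hFE, hFu, havoid, hconc, hlarge⟩ :=
    exists_avoiding_subset (by omega) hs0 hm hp hE0
      (cubesMeeting_finite_of_subset_unitCube (by positivity) hE1) hE2 hG
      (by rw [Fintype.card_fin, hdn]; exact_mod_cast hkey)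
  refine ⟨s * m, F, hr, le_mul_of_one_le_right hs0.le (by exact_mod_cast hm),
    le_mul_of_one_le_right (by positivity) (by exact_mod_cast hp), hQr, hr4Q, hF0, hFE, hFu,
    havoid, hconc, fun μ hμ => ?_⟩
  have h : ((p ^ d : ℕ) : ℝ) ≤ ((2 * cubeCount s (F ∩ dyadicCube (s * m * p) μ) : ℕ) : ℝ) :=
    Nat.cast_le.2 (by simpa using hlarge μ hμ)
  rw [mul_div_cancel_left₀ _ (by positivity)]
  push_cast at h
  linarith

/-- **Lemma 2.1 (single-scale avoidance).** -/
theorem discrete_avoidance (d n : ℕ) (hd : 1 ≤ d) (hn : 2 ≤ n)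
    (l s : ℝ) (hl : IsDyadicLength l) (hs : IsDyadicLength s) (hsl : s < l)
    (E : Set (Fin d → ℝ)) (hE0 : E.Nonempty) (hE1 : E ⊆ unitCube d)
    (hE2 : IsCubeUnion l E)
    (G : Set (Fin n × Fin d → ℝ)) (hG0 : G.Nonempty) (hG1 : IsCubeUnion s G)
    (hGlow : (l / s) ^ d ≤ (cubeCount s G : ℝ))
    (hGhigh : (cubeCount s G : ℝ) ≤ (1 / 2) * (l / s) ^ (d * n)) :
    ∃ r : ℝ, ∃ F : Set (Fin d → ℝ),
      IsDyadicLength r ∧ s ≤ r ∧ r ≤ l ∧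
      (l ^ (-(d : ℝ)) * s ^ ((d : ℝ) * n) * (cubeCount s G : ℝ)) ^
          (1 / ((d : ℝ) * ((n : ℝ) - 1))) ≤ r ∧
      r ≤ 4 * (l ^ (-(d : ℝ)) * s ^ ((d : ℝ) * n) * (cubeCount s G : ℝ)) ^
          (1 / ((d : ℝ) * ((n : ℝ) - 1))) ∧
      F.Nonempty ∧ F ⊆ E ∧ IsCubeUnion s F ∧
      -- (1) Avoidance
      (∀ m : Fin n → Fin d → ℤ, (∀ j, m j ∈ cubesMeeting s F) → Function.Injective m →
        (fun p : Fin n × Fin d => m p.1 p.2) ∉ cubesMeeting s G) ∧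
      -- (2) Non-concentration
      (∀ m' ∈ cubesMeeting r E, ∀ m₁ ∈ cubesMeeting s F, ∀ m₂ ∈ cubesMeeting s F,
        dyadicCube s m₁ ⊆ dyadicCube r m' → dyadicCube s m₂ ⊆ dyadicCube r m' → m₁ = m₂) ∧
      -- (3) Large size
      (∀ m ∈ cubesMeeting l E,
        (1 / 2) * (l / r) ^ d ≤ (cubeCount s (F ∩ dyadicCube l m) : ℝ)) :=
  discrete_avoidance_general d n hd hn l s hl hs E hE0 hE1 hE2 G hGlow hGhigh
end
end

section
/- Fix integers d ≥ 1, n ≥ 2, a real α with d ≤ α < dn, and a sequence ε_k > 0 with dn − α − 2ε_k > 0 for all k. Let {Z_k}_{k≥1} be subsets of ℝ^{dn} such that #B_l^{dn}(Z_k) ≥ l^{−d} for every dyadic length l ∈ (0,1] and every k. Let {l_k}_{k≥0} be dyadic lengths with l_0 = 1 satisfying, for each k ≥ 1: #B_{l_k}^{dn}(Z_k) ≤ l_k^{−α−ε_k/2}, l_k^{dn−α−ε_k} ≤ (1/2)·l_{k−1}^{dn}, and l_k^{ε_k} ≤ l_{k−1}^{2d}. Then there exist a constant C > 0 depending only on d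 and n, sets {X_k}_{k≥0}, and dyadic lengths {r_k}_{k≥1} such that: X_0 = [0,1)^d; each X_k (k ≥ 1) is a nonempty union of cubes of B_{l_k}^d contained in X_{k−1}; no strongly non-diagonal cube of B_{l_k}^{dn}(Z_k) is contained in X_k^n; l_k ≤ r_k ≤ l_{k−1}; r_k ≤ C·l_k^{(dn−α−ε_k)/(d(n−1))}; #B_{l_k}^d(X_k ∩ I) ≥ (1/2)(l_{k−1}/r_k)^d for every I ∈ B_{l_{k−1}}^d(X_{k−1}); and #B_{l_k}^d(X_k ∩ I') ≤ 1 for every I' ∈ B_{r_k}^d(X_{k−1}). -/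
open Filter Set

noncomputable section

/-!
Write `l_k = 2^{-a_k}` and record a union of cubes of `B_{l_k}^d` by the finite set of integer
indices of its cubes. Given `X_{k-1}` and an intermediate scale `r_k = 2^{-ρ_k}`, choose one
subcube of side `l_k` in each cube of side `r_k` inside `X_{k-1}`, uniformly and independently.
The factors of a strongly non-diagonal cube are distinct, so they are all chosen with probability
at most `(l_k / r_k)^{dn}` (and never if two of them lie in the same cube of side `r_k`). With
`#B_{l_k}(Z_k) ≤ l_k^{-α-ε_k/2}` and `ρ_k` as large as this allows, the expected number of such
cubes of `B_{l_k}^{dn}(Z_k)` that survive is at most half of `(l_{k-1}/r_k)^d`, the number of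
subcubes chosen inside each cube of `X_{k-1}`. Fix a selection achieving at most the expectation
and delete one factor of every surviving cube: every cube of `X_{k-1}` keeps half of its chosen
subcubes and every cube of side `r_k` contains at most one. The constraint
`l_k^{dn-α-ε_k} ≤ l_{k-1}^{dn}/2` makes room for `r_k ≤ l_{k-1}`, and `l_k^{ε_k} ≤ l_{k-1}^{2d}`
is what makes `r_k ≤ 4 l_k^{(dn-α-ε_k)/(d(n-1))}`.
-/

open Function

namespace NestedConstruction

variable {ι : Type*}

def dyadicIndex (a : ℕ) (x : ι → ℝ) : ι → ℤ := fun i => ⌊x i * 2 ^ a⌋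

/-- `/` on `ℤ` rounds down for positive divisors, so this indexes the cube `c` times larger that
contains the cube of index `M`. -/
def coarsen (c : ℕ) (M : ι → ℤ) : ι → ℤ := fun i => M i / c

theorem mem_dyadicCube_iff {a : ℕ} {m : ι → ℤ} {x : ι → ℝ} :
    x ∈ dyadicCube ((2 : ℝ) ^ (-(a : ℤ))) m ↔ dyadicIndex a x = m := by
  have h2 : (0 : ℝ) < 2 ^ a := by positivity
  simp only [dyadicCube, Set.mem_ofPred_eq, funext_iff, dyadicIndex, Int.floor_eq_iff,
    zpow_neg, zpow_natCast, ← div_eq_inv_mul, div_le_iff₀ h2, lt_div_iff₀ h2]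

theorem cubesMeeting_eq_image (a : ℕ) (E : Set (ι → ℝ)) :
    cubesMeeting ((2 : ℝ) ^ (-(a : ℤ))) E = dyadicIndex a '' E := by
  ext m
  simp only [cubesMeeting, Set.mem_ofPred_eq, Set.Nonempty, Set.mem_inter_iff,
    mem_dyadicCube_iff, Set.mem_image, and_comm]

theorem coarsen_dyadicIndex {a b : ℕ} (h : b ≤ a) (x : ι → ℝ) :
    coarsen (2 ^ (a - b)) (dyadicIndex a x) = dyadicIndex b x := by
  funext i
  have : x i * 2 ^ b = x i * 2 ^ a / ((2 ^ (a - b) : ℕ) : ℝ) := by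
    rw [Nat.cast_pow, Nat.cast_ofNat, eq_div_iff (by positivity), mul_assoc, ← pow_add,
      Nat.add_sub_cancel' h]
  simp only [coarsen, dyadicIndex, this, Int.floor_div_natCast]

theorem coarsen_coarsen (c c' : ℕ) (M : ι → ℤ) :
    coarsen c' (coarsen c M) = coarsen (c * c') M := by
  funext i
  simp only [coarsen, Nat.cast_mul, Int.ediv_ediv_of_nonneg (Int.natCast_nonneg c)]

theorem coarsen_eq_iff {c : ℕ} (hc : 0 < c) {M m : ι → ℤ} :
    coarsen c M = m ↔ ∀ i, M i ∈ Finset.Ico (m i * c) (m i * c + c) := by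
  simp only [funext_iff, coarsen, Finset.mem_Ico,
    Int.ediv_eq_iff_of_pos (by positivity : (0 : ℤ) < c)]

theorem dyadicIndex_surjective (a : ℕ) : Surjective (dyadicIndex (ι := ι) a) := fun m =>
  ⟨fun i => m i / 2 ^ a, funext fun i => by simp [dyadicIndex]⟩

theorem cubesMeeting_preimage (a : ℕ) (T : Set (ι → ℤ)) :
    cubesMeeting ((2 : ℝ) ^ (-(a : ℤ))) (dyadicIndex a ⁻¹' T) = T := by
  rw [cubesMeeting_eq_image, Set.image_preimage_eq _ (dyadicIndex_surjective a)]

def cubeUnion (a : ℕ) (S : Finset (ι → ℤ)) : Set (ι → ℝ) :=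
  ⋃ m ∈ S, dyadicCube ((2 : ℝ) ^ (-(a : ℤ))) m

theorem cubeUnion_eq_preimage (a : ℕ) (S : Finset (ι → ℤ)) :
    cubeUnion a S = dyadicIndex a ⁻¹' S := by
  ext x
  simp only [cubeUnion, Set.mem_iUnion, mem_dyadicCube_iff, exists_prop, exists_eq_right',
    Set.mem_preimage, Finset.mem_coe]

theorem cubesMeeting_cubeUnion (a : ℕ) (S : Finset (ι → ℤ)) :
    cubesMeeting ((2 : ℝ) ^ (-(a : ℤ))) (cubeUnion a S) = S := by
  rw [cubeUnion_eq_preimage, cubesMeeting_preimage]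

theorem cubeUnion_nonempty (a : ℕ) {S : Finset (ι → ℤ)} (hS : S.Nonempty) :
    (cubeUnion a S).Nonempty := by
  rw [cubeUnion_eq_preimage]
  exact hS.to_set.preimage (dyadicIndex_surjective a)

theorem cubeUnion_subset_cubeUnion {a b : ℕ} (h : b ≤ a) {S P : Finset (ι → ℤ)}
    (hSP : ∀ M ∈ S, coarsen (2 ^ (a - b)) M ∈ P) : cubeUnion a S ⊆ cubeUnion b P := by
  intro x hx
  rw [cubeUnion_eq_preimage] at hx ⊢
  rw [Set.mem_preimage, ← coarsen_dyadicIndex h]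
  exact hSP _ hx

theorem cubeUnion_zero_singleton_zero (d : ℕ) : cubeUnion 0 {0} = unitCube d := by
  ext x
  simp [cubeUnion_eq_preimage, unitCube, dyadicIndex, funext_iff, Int.floor_eq_iff]

theorem not_dyadicCube_subset_nthPower {d n a : ℕ} {S : Finset (Fin d → ℤ)}
    {M : Fin n × Fin d → ℤ} (hM : ∃ j, cubeRow M j ∉ S) :
    ¬ dyadicCube ((2 : ℝ) ^ (-(a : ℤ))) M ⊆ nthPower (cubeUnion a S) := by
  obtain ⟨j, hj⟩ := hM
  obtain ⟨y, rfl⟩ := dyadicIndex_surjective a M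
  intro hsub
  have := hsub (mem_dyadicCube_iff.2 rfl) j
  rw [cubeUnion_eq_preimage] at this
  exact hj this

section Counting

variable [Fintype ι]

theorem cubeCount_cubeUnion_inter {a b : ℕ} (h : b ≤ a) (S : Finset (ι → ℤ)) (m : ι → ℤ) :
    cubeCount ((2 : ℝ) ^ (-(a : ℤ))) (cubeUnion a S ∩ dyadicCube ((2 : ℝ) ^ (-(b : ℤ))) m) =
      (S.filter fun M => coarsen (2 ^ (a - b)) M = m).card := by
  have : cubeUnion a S ∩ dyadicCube ((2 : ℝ) ^ (-(b : ℤ))) m =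
      dyadicIndex a ⁻¹' ↑(S.filter fun M => coarsen (2 ^ (a - b)) M = m) := by
    ext x
    simp only [cubeUnion_eq_preimage, Set.mem_inter_iff, Set.mem_preimage, mem_dyadicCube_iff,
      ← coarsen_dyadicIndex h, Finset.coe_filter, Set.mem_ofPred_eq, Finset.mem_coe]
  rw [cubeCount, this, cubesMeeting_preimage, Set.ncard_coe_finset]

variable [DecidableEq ι]

def children (c : ℕ) (m : ι → ℤ) : Finset (ι → ℤ) :=
  Fintype.piFinset fun i => Finset.Ico (m i * c) (m i * c + c)

theorem mem_children {c : ℕ} (hc : 0 < c) {m M : ι → ℤ} :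
    M ∈ children c m ↔ coarsen c M = m := by
  rw [children, Fintype.mem_piFinset, coarsen_eq_iff hc]

theorem card_children (c : ℕ) (m : ι → ℤ) : (children c m).card = c ^ Fintype.card ι := by
  simp [children, Fintype.card_piFinset, Int.card_Ico]

end Counting

theorem card_filter_eqOn_mul_le {Q β : Type*} [Fintype Q] [DecidableEq Q] [Fintype β]
    [DecidableEq β] {n : ℕ} {q : Fin n → Q} (hq : Injective q) (w : Fin n → β) :
    (Finset.univ.filter fun σ : Q → β => ∀ j, σ (q j) = w j).card * Fintype.card β ^ n ≤
      Fintype.card (Q → β) := by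
  let Φ : {σ : Q → β // ∀ j, σ (q j) = w j} × (Fin n → β) → Q → β := fun p => extend q p.2 p.1
  have hΦ : Injective Φ := by
    rintro ⟨⟨σ, hσ⟩, τ⟩ ⟨⟨σ', hσ'⟩, τ'⟩ h
    obtain rfl : τ = τ' := funext fun j => by
      simpa only [Φ, hq.extend_apply] using congrFun h (q j)
    refine Prod.ext (Subtype.ext (funext fun y => ?_)) rfl
    by_cases hy : ∃ j, q j = y
    · obtain ⟨j, rfl⟩ := hy
      exact (hσ j).trans (hσ' j).symm
    · simpa only [Φ, extend_apply' _ _ _ hy] using congrFun h y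
  simpa only [Fintype.card_prod, Fintype.card_subtype, Fintype.card_fun, Fintype.card_fin]
    using Fintype.card_le_of_injective Φ hΦ

theorem exists_card_filter_mul_le {D X : Type*} [Fintype D] [Nonempty D] (B : Finset X)
    (p : D → X → Prop) [∀ σ x, Decidable (p σ x)] (K : ℕ)
    (h : ∀ x ∈ B, (Finset.univ.filter fun σ => p σ x).card * K ≤ Fintype.card D) :
    ∃ σ, (B.filter (p σ)).card * K ≤ B.card := by
  have hsum : ∑ σ, (B.filter (p σ)).card * K ≤ ∑ _σ : D, B.card :=
    calc ∑ σ, (B.filter (p σ)).card * K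
        = ∑ x ∈ B, (Finset.univ.filter fun σ => p σ x).card * K := by
          simp only [Finset.card_filter, Finset.sum_mul]
          exact Finset.sum_comm
      _ ≤ ∑ _x ∈ B, Fintype.card D := Finset.sum_le_sum h
      _ = ∑ _σ : D, B.card := by simp [mul_comm]
  obtain ⟨σ, -, hσ⟩ := Finset.exists_le_of_sum_le Finset.univ_nonempty hsum
  exact ⟨σ, hσ⟩

def child (t : ℕ) (q : ι → ℤ) (w : ι → Fin t) : ι → ℤ := fun i => q i * t + w i

theorem coarsen_child {t : ℕ} (q : ι → ℤ) (w : ι → Fin t) : coarsen t (child t q w) = q := by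
  funext i
  have ht : (0 : ℤ) < t := by exact_mod_cast (w i).pos
  simp only [coarsen, child, Int.ediv_eq_iff_of_pos ht]
  have := (w i).isLt
  constructor <;> omega

theorem child_eq_child_iff {t : ℕ} {q q' : ι → ℤ} {w w' : ι → Fin t} :
    child t q w = child t q' w' ↔ q = q' ∧ w = w' := by
  refine ⟨fun h => ?_, fun ⟨hq, hw⟩ => hq ▸ hw ▸ rfl⟩
  obtain rfl : q = q' := by rw [← coarsen_child q w, h, coarsen_child]
  refine ⟨rfl, funext fun i => Fin.ext ?_⟩
  have := congrFun h i
  simp only [child, add_right_inj, Nat.cast_inj] at this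
  exact_mod_cast this

section Selection

variable [Fintype ι] {t : ℕ}

def selection (Q : Finset (ι → ℤ)) (σ : Q → ι → Fin t) : Finset (ι → ℤ) :=
  Finset.univ.image fun q : Q => child t q (σ q)

theorem mem_selection {Q : Finset (ι → ℤ)} {σ : Q → ι → Fin t} {M : ι → ℤ} :
    M ∈ selection Q σ ↔ ∃ q : Q, child t q (σ q) = M := by
  simp [selection]

theorem card_filter_selection_coarsen_le_one (Q : Finset (ι → ℤ)) (σ : Q → ι → Fin t)
    (q : ι → ℤ) : ((selection Q σ).filter fun M => coarsen t M = q).card ≤ 1 := by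
  refine Finset.card_le_one.2 fun M hM M' hM' => ?_
  simp only [Finset.mem_filter, mem_selection] at hM hM'
  obtain ⟨⟨p, rfl⟩, hp⟩ := hM
  obtain ⟨⟨p', rfl⟩, hp'⟩ := hM'
  rw [coarsen_child] at hp hp'
  rw [Subtype.ext (hp.trans hp'.symm)]

variable [DecidableEq ι]

theorem card_filter_forall_mem_selection_mul_le (Q : Finset (ι → ℤ)) {n : ℕ}
    {x : Fin n → ι → ℤ} (hx : Injective x) :
    (Finset.univ.filter fun σ : Q → ι → Fin t => ∀ j, x j ∈ selection Q σ).card *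
      (t ^ Fintype.card ι) ^ n ≤ Fintype.card (Q → ι → Fin t) := by
  rcases (Finset.univ.filter fun σ : Q → ι → Fin t => ∀ j, x j ∈ selection Q σ).eq_empty_or_nonempty
    with h | ⟨σ₀, hσ₀⟩
  · simp [h]
  simp only [Finset.mem_filter, Finset.mem_univ, true_and, mem_selection] at hσ₀
  choose q hq using hσ₀
  have hq_inj : Injective q := fun j j' h => hx (by rw [← hq j, ← hq j', h])
  have hsub : (Finset.univ.filter fun σ : Q → ι → Fin t => ∀ j, x j ∈ selection Q σ) ⊆
      Finset.univ.filter fun σ => ∀ j, σ (q j) = σ₀ (q j) := by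
    intro σ hσ
    simp only [Finset.mem_filter, Finset.mem_univ, true_and, mem_selection] at hσ ⊢
    intro j
    obtain ⟨q', hq'⟩ := hσ j
    rw [← hq j, child_eq_child_iff] at hq'
    obtain rfl := Subtype.ext hq'.1
    exact hq'.2
  calc _ ≤ (Finset.univ.filter fun σ : Q → ι → Fin t => ∀ j, σ (q j) = σ₀ (q j)).card *
        Fintype.card (ι → Fin t) ^ n := by
        rw [Fintype.card_fun, Fintype.card_fin]
        exact Nat.mul_le_mul_right _ (Finset.card_le_card hsub)
    _ ≤ _ := card_filter_eqOn_mul_le hq_inj _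

theorem le_card_filter_selection {u : ℕ} (hu : 0 < u) {P : Finset (ι → ℤ)} {m : ι → ℤ}
    (hm : m ∈ P) (σ : P.biUnion (children u) → ι → Fin t) :
    u ^ Fintype.card ι ≤
      ((selection (P.biUnion (children u)) σ).filter fun M => coarsen (t * u) M = m).card := by
  have hQ : ∀ q ∈ children u m, q ∈ P.biUnion (children u) := fun q hq =>
    Finset.mem_biUnion.2 ⟨m, hm, hq⟩
  rw [← card_children u m, ← Finset.card_attach]
  refine Finset.card_le_card_of_injOn (fun q => child t q (σ ⟨q, hQ q q.2⟩)) ?_ ?_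
  · intro q _
    simp only [Finset.coe_filter, Set.mem_ofPred_eq, mem_selection]
    refine ⟨⟨⟨q, hQ q q.2⟩, rfl⟩, ?_⟩
    rw [← coarsen_coarsen, coarsen_child, ← mem_children hu]
    exact q.2
  · intro q _ q' _ h
    exact Subtype.ext (child_eq_child_iff.1 h).1

theorem coarsen_mem_of_mem_selection {u : ℕ} (hu : 0 < u) {P : Finset (ι → ℤ)}
    {σ : P.biUnion (children u) → ι → Fin t} {M : ι → ℤ}
    (hM : M ∈ selection (P.biUnion (children u)) σ) : coarsen (t * u) M ∈ P := by
  obtain ⟨q, rfl⟩ := mem_selection.1 hM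
  obtain ⟨m, hm, hqm⟩ := Finset.mem_biUnion.1 q.2
  rwa [← coarsen_coarsen, coarsen_child, (mem_children hu).1 hqm]

theorem exists_sparse_refinement {n : ℕ} (hn : 0 < n) (ht : 0 < t) {u : ℕ} (hu : 0 < u)
    (P : Finset (ι → ℤ)) (Bad : Finset (Fin n → ι → ℤ)) (hBad : ∀ x ∈ Bad, Injective x)
    (hbudget : 2 * Bad.card ≤ u ^ Fintype.card ι * (t ^ Fintype.card ι) ^ n) :
    ∃ S : Finset (ι → ℤ),
      (∀ M ∈ S, coarsen (t * u) M ∈ P) ∧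
      (∀ m ∈ P, u ^ Fintype.card ι ≤ 2 * (S.filter fun M => coarsen (t * u) M = m).card) ∧
      (∀ q, (S.filter fun M => coarsen t M = q).card ≤ 1) ∧
      ∀ x ∈ Bad, ∃ j, x j ∉ S := by
  set Q := P.biUnion (children u)
  have : Nonempty (Q → ι → Fin t) := ⟨fun _ _ => ⟨0, ht⟩⟩
  obtain ⟨σ, hσ⟩ := exists_card_filter_mul_le (D := Q → ι → Fin t) Bad
    (fun σ x => ∀ j, x j ∈ selection Q σ) _
    fun x hx => card_filter_forall_mem_selection_mul_le Q (hBad x hx)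
  -- removing one row of every configuration that survived costs each parent at most half
  -- of its `u ^ card ι` selected subcubes
  set R := (Bad.filter fun x => ∀ j, x j ∈ selection Q σ).image (· ⟨0, hn⟩)
  have hR : 2 * R.card ≤ u ^ Fintype.card ι := by
    refine le_of_mul_le_mul_right ?_ (by positivity : 0 < (t ^ Fintype.card ι) ^ n)
    have := Nat.mul_le_mul_right ((t ^ Fintype.card ι) ^ n) (Finset.card_image_le (s :=
      Bad.filter fun x => ∀ j, x j ∈ selection Q σ) (f := (· ⟨0, hn⟩)))
    nlinarith
  refine ⟨selection Q σ \ R, fun M hM => coarsen_mem_of_mem_selection hu (Finset.mem_sdiff.1 hM).1,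
    fun m hm => ?_, fun q => ?_, fun x hx => ?_⟩
  · have hsel : u ^ Fintype.card ι ≤
        ((selection Q σ).filter fun M => coarsen (t * u) M = m).card :=
      le_card_filter_selection hu hm σ
    have hsdiff : ((selection Q σ).filter fun M => coarsen (t * u) M = m) \ R =
        (selection Q σ \ R).filter fun M => coarsen (t * u) M = m := by
      ext M
      simp only [Finset.mem_sdiff, Finset.mem_filter]
      tauto
    have := Finset.le_card_sdiff R ((selection Q σ).filter fun M => coarsen (t * u) M = m)
    rw [hsdiff] at this
    omega
  · exact (Finset.card_le_card (Finset.filter_subset_filter _ Finset.sdiff_subset)).trans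
      (card_filter_selection_coarsen_le_one Q σ q)
  · by_cases hs : ∀ j, x j ∈ selection Q σ
    · exact ⟨⟨0, hn⟩, fun h => (Finset.mem_sdiff.1 h).2
        (Finset.mem_image.2 ⟨x, Finset.mem_filter.2 ⟨hx, hs⟩, rfl⟩)⟩
    · obtain ⟨j, hj⟩ := not_forall.1 hs
      exact ⟨j, fun h => hj (Finset.mem_sdiff.1 h).1⟩

end Selection

theorem one_le_and_two_le_of_lt_mul {d n : ℕ} (h : (d : ℝ) < d * n) : 1 ≤ d ∧ 2 ≤ n := by
  have h' : d * 1 < d * n := by rw [mul_one]; exact_mod_cast h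
  exact ⟨Nat.pos_of_ne_zero (by rintro rfl; simp at h'), Nat.lt_of_mul_lt_mul_left h'⟩

theorem exists_intermediate_exponent {d n : ℕ} {α ε : ℝ} (hαd : (d : ℝ) ≤ α)
    (hαn : α < d * n) {b A : ℕ}
    (hbA : b * (d * n) + 1 ≤ A * (d * n - α - ε)) (hbε : 2 * d * b ≤ A * ε) :
    ∃ ρ : ℕ, b ≤ ρ ∧ ρ ≤ A ∧
      A * (α + ε / 2) + 1 ≤ ((ρ : ℝ) - b) * d + ((A : ℝ) - ρ) * (d * n) ∧
      A * ((d * n - α - ε) / (d * (n - 1))) ≤ ρ + 2 := by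
  obtain ⟨hd, hn⟩ := one_le_and_two_le_of_lt_mul (hαd.trans_lt hαn)
  have hd' : (1 : ℝ) ≤ d := by exact_mod_cast hd
  have hn' : (2 : ℝ) ≤ n := by exact_mod_cast hn
  have hD : 1 ≤ (d : ℝ) * (n - 1) := by nlinarith
  have hA : (0 : ℝ) ≤ A := A.cast_nonneg
  -- `ρ` is the largest integer leaving room for the whole budget `A (α + ε/2) + 1`
  set x := (A * (d * n - α - ε / 2) - b * d - 1) / (d * (n - 1)) with hx
  have hxD : x * (d * (n - 1)) = A * (d * n - α - ε / 2) - b * d - 1 :=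
    div_mul_cancel₀ _ (by positivity)
  have hbx : (b : ℝ) ≤ x := by
    rw [hx, le_div_iff₀ (by positivity)]
    nlinarith
  have hxA : x ≤ A := by
    rw [hx, div_le_iff₀ (by positivity)]
    nlinarith
  have hρx : (⌊x⌋₊ : ℝ) ≤ x := Nat.floor_le (b.cast_nonneg.trans hbx)
  refine ⟨⌊x⌋₊, Nat.le_floor hbx, by exact_mod_cast hρx.trans hxA, ?_, ?_⟩
  · nlinarith
  · have hθ : A * ((d * n - α - ε) / (d * (n - 1))) ≤ x + 1 := by
      rw [hx, div_add_one (by positivity), ← mul_div_assoc,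
        div_le_div_iff_of_pos_right (by positivity)]
      nlinarith
    linarith [Nat.lt_floor_add_one x]

theorem two_zpow_neg_rpow (a : ℕ) (s : ℝ) : ((2 : ℝ) ^ (-(a : ℤ))) ^ s = 2 ^ (-(a * s)) := by
  rw [← Real.rpow_intCast, ← Real.rpow_mul zero_le_two]
  push_cast
  ring_nf

theorem exists_intermediate_scale {d n : ℕ} {α ε : ℝ} (hαd : (d : ℝ) ≤ α) (hαn : α < d * n)
    {b A : ℕ}
    (hbA : ((2 : ℝ) ^ (-(A : ℤ))) ^ ((d : ℝ) * n - α - ε) ≤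
      1 / 2 * ((2 : ℝ) ^ (-(b : ℤ))) ^ ((d : ℝ) * n))
    (hbε : ((2 : ℝ) ^ (-(A : ℤ))) ^ ε ≤ ((2 : ℝ) ^ (-(b : ℤ))) ^ (2 * (d : ℝ))) :
    ∃ ρ : ℕ, b ≤ ρ ∧ ρ ≤ A ∧
      (∀ N : ℕ, (N : ℝ) ≤ ((2 : ℝ) ^ (-(A : ℤ))) ^ (-α - ε / 2) →
        2 * N ≤ (2 ^ (ρ - b)) ^ d * ((2 ^ (A - ρ)) ^ d) ^ n) ∧
      (2 : ℝ) ^ (-(ρ : ℤ)) ≤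
        4 * ((2 : ℝ) ^ (-(A : ℤ))) ^ (((d : ℝ) * n - α - ε) / ((d : ℝ) * ((n : ℝ) - 1))) := by
  have h2 : ∀ s : ℝ, 1 / 2 * (2 : ℝ) ^ s = 2 ^ (s - 1) := fun s => by
    rw [Real.rpow_sub_one two_ne_zero]; ring
  rw [two_zpow_neg_rpow, two_zpow_neg_rpow, h2, (Real.rpow_le_rpow_left_iff one_lt_two)] at hbA
  rw [two_zpow_neg_rpow, two_zpow_neg_rpow, (Real.rpow_le_rpow_left_iff one_lt_two)] at hbε
  obtain ⟨ρ, hbρ, hρA, hbudget, hscale⟩ :=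
    exists_intermediate_exponent hαd hαn (b := b) (A := A) (by linarith) (by linarith)
  refine ⟨ρ, hbρ, hρA, ?_, ?_⟩
  · intro N hN
    have hcast : (((2 ^ (ρ - b)) ^ d * ((2 ^ (A - ρ)) ^ d) ^ n : ℕ) : ℝ) =
        2 ^ (((ρ : ℝ) - b) * d + ((A : ℝ) - ρ) * (d * n)) := by
      rw [← Nat.cast_sub hbρ, ← Nat.cast_sub hρA]
      norm_cast
      ring
    have h2N : (2 * N : ℝ) ≤ 2 ^ (-(A * (-α - ε / 2)) + 1) := by
      rw [Real.rpow_add_one two_ne_zero, ← two_zpow_neg_rpow]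
      linarith
    have : (2 * N : ℝ) ≤ (((2 ^ (ρ - b)) ^ d * ((2 ^ (A - ρ)) ^ d) ^ n : ℕ) : ℝ) := by
      rw [hcast]
      exact h2N.trans (Real.rpow_le_rpow_of_exponent_le one_le_two (by linarith))
    exact_mod_cast this
  · rw [two_zpow_neg_rpow, show (4 : ℝ) = 2 ^ (2 : ℝ) by norm_num, ← Real.rpow_add two_pos,
      ← Real.rpow_intCast]
    exact (Real.rpow_le_rpow_left_iff one_lt_two).2 (by push_cast; linarith)

theorem exists_nested_index_sets {d n : ℕ} (hn : 0 < n) (a ρ : ℕ → ℕ)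
    (haρ : ∀ k, a k ≤ ρ k) (hρa : ∀ k, ρ k ≤ a (k + 1))
    (Bad : ℕ → Finset (Fin n → Fin d → ℤ)) (hBad : ∀ k, ∀ x ∈ Bad k, Injective x)
    (hbudget : ∀ k,
      2 * (Bad k).card ≤ (2 ^ (ρ k - a k)) ^ d * ((2 ^ (a (k + 1) - ρ k)) ^ d) ^ n) :
    ∃ S : ℕ → Finset (Fin d → ℤ), S 0 = {0} ∧ ∀ k,
      (S k).Nonempty ∧
      (∀ M ∈ S (k + 1), coarsen (2 ^ (a (k + 1) - a k)) M ∈ S k) ∧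
      (∀ m ∈ S k, (2 ^ (ρ k - a k)) ^ d ≤
        2 * ((S (k + 1)).filter fun M => coarsen (2 ^ (a (k + 1) - a k)) M = m).card) ∧
      (∀ q, ((S (k + 1)).filter fun M => coarsen (2 ^ (a (k + 1) - ρ k)) M = q).card ≤ 1) ∧
      ∀ x ∈ Bad k, ∃ j, x j ∉ S (k + 1) := by
  have htu : ∀ k, 2 ^ (a (k + 1) - ρ k) * 2 ^ (ρ k - a k) = 2 ^ (a (k + 1) - a k) := fun k => by
    rw [← pow_add, Nat.sub_add_sub_cancel (hρa k) (haρ k)]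
  choose T hT using fun k P => exists_sparse_refinement (ι := Fin d) hn
    (t := 2 ^ (a (k + 1) - ρ k)) (by positivity) (u := 2 ^ (ρ k - a k)) (by positivity) P
    (Bad k) (hBad k) (by simpa only [Fintype.card_fin] using hbudget k)
  simp only [htu, Fintype.card_fin] at hT
  let S : ℕ → Finset (Fin d → ℤ) := fun k => Nat.rec {0} T k
  have hne : ∀ k, (S k).Nonempty := by
    intro k
    induction k with
    | zero => exact Finset.singleton_nonempty 0
    | succ k ih =>
      obtain ⟨m, hm⟩ := ih
      have hpos : 0 < (2 ^ (ρ k - a k)) ^ d := by positivity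
      exact (Finset.card_pos.1 (by linarith [(hT k (S k)).2.1 m hm])).mono
        (Finset.filter_subset _ _)
  exact ⟨S, rfl, fun k => ⟨hne k, hT k (S k)⟩⟩

theorem exists_finset_rows_stronglyNonDiagonal {d n : ℕ} (l : ℝ) {Z : Set (Fin n × Fin d → ℝ)}
    (hZ : 0 < cubeCount l Z) :
    ∃ B : Finset (Fin n → Fin d → ℤ), B.card ≤ cubeCount l Z ∧ (∀ x ∈ B, Injective x) ∧
      ∀ M ∈ cubesMeeting l Z, StronglyNonDiagonal M → cubeRow M ∈ B := by
  classical
  have hfin := Set.finite_of_ncard_pos hZ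
  refine ⟨(hfin.toFinset.filter StronglyNonDiagonal).image cubeRow, ?_, ?_, ?_⟩
  · calc _ ≤ (hfin.toFinset.filter StronglyNonDiagonal).card := Finset.card_image_le
      _ ≤ hfin.toFinset.card := Finset.card_filter_le _ _
      _ = cubeCount l Z := (Set.ncard_eq_toFinset_card _ hfin).symm
  · simp only [Finset.mem_image, Finset.mem_filter, forall_exists_index, and_imp]
    rintro x M - hM rfl
    exact hM
  · intro M hM hSND
    exact Finset.mem_image.2 ⟨M, Finset.mem_filter.2 ⟨hfin.mem_toFinset.2 hM, hSND⟩, rfl⟩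

theorem two_zpow_neg_antitone {a b : ℕ} (h : b ≤ a) :
    (2 : ℝ) ^ (-(a : ℤ)) ≤ 2 ^ (-(b : ℤ)) :=
  zpow_le_zpow_right₀ one_le_two (by omega)

theorem two_zpow_neg_div_two_zpow_neg {a b : ℕ} (h : b ≤ a) :
    (2 : ℝ) ^ (-(b : ℤ)) / 2 ^ (-(a : ℤ)) = 2 ^ (a - b) := by
  rw [← zpow_sub₀ two_ne_zero, ← zpow_natCast, Nat.cast_sub h]
  ring_nf

theorem forall_one_le_iff {p : ℕ → Prop} : (∀ k, 1 ≤ k → p k) ↔ ∀ k, p (k + 1) :=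
  ⟨fun h k => h _ le_add_self, fun h k hk => by
    obtain ⟨k, rfl⟩ := Nat.exists_eq_add_of_le' hk
    exact h k⟩

end NestedConstruction

open NestedConstruction in
theorem nested_construction_general (d n : ℕ) :
    ∃ C : ℝ, 0 < C ∧
      ∀ (α : ℝ), (d : ℝ) ≤ α → α < (d : ℝ) * n →
      ∀ (ε : ℕ → ℝ), (∀ k, 0 < ε k) → (∀ k, 0 < (d : ℝ) * n - α - 2 * ε k) →
      ∀ (Zk : ℕ → Set (Fin n × Fin d → ℝ)),
        (∀ k, ∀ l : ℝ, IsDyadicLength l → l ≤ 1 →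
          l ^ (-(d : ℝ)) ≤ (cubeCount l (Zk k) : ℝ)) →
      ∀ (l : ℕ → ℝ), (∀ k, IsDyadicLength (l k)) → l 0 = 1 →
        (∀ k, 1 ≤ k → (cubeCount (l k) (Zk k) : ℝ) ≤ (l k) ^ (-α - ε k / 2)) →
        (∀ k, 1 ≤ k → (l k) ^ ((d : ℝ) * n - α - ε k) ≤ (1 / 2) * (l (k - 1)) ^ ((d : ℝ) * n)) →
        (∀ k, 1 ≤ k → (l k) ^ (ε k) ≤ (l (k - 1)) ^ (2 * (d : ℝ))) →
      ∃ X : ℕ → Set (Fin d → ℝ), ∃ r : ℕ → ℝ,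
        X 0 = unitCube d ∧
        (∀ k, 1 ≤ k → (X k).Nonempty ∧ IsCubeUnion (l k) (X k) ∧ X k ⊆ X (k - 1)) ∧
        -- avoidance of strongly non-diagonal cubes of `B_{l_k}^{dn}(Z_k)`
        (∀ k, 1 ≤ k → ∀ M : Fin n × Fin d → ℤ, StronglyNonDiagonal M →
          M ∈ cubesMeeting (l k) (Zk k) → ¬ dyadicCube (l k) M ⊆ nthPower (X k)) ∧
        -- the intermediate scales
        (∀ k, 1 ≤ k → IsDyadicLength (r k) ∧ l k ≤ r k ∧ r k ≤ l (k - 1) ∧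
          r k ≤ C * (l k) ^ (((d : ℝ) * n - α - ε k) / ((d : ℝ) * ((n : ℝ) - 1)))) ∧
        -- large size
        (∀ k, 1 ≤ k → ∀ m ∈ cubesMeeting (l (k - 1)) (X (k - 1)),
          (1 / 2) * (l (k - 1) / r k) ^ d ≤
            (cubeCount (l k) (X k ∩ dyadicCube (l (k - 1)) m) : ℝ)) ∧
        -- non-concentration
        (∀ k, 1 ≤ k → ∀ m' ∈ cubesMeeting (r k) (X (k - 1)),
          cubeCount (l k) (X k ∩ dyadicCube (r k) m') ≤ 1) := by
  refine ⟨4, by norm_num, fun α hαd hαn ε _ _ Zk hZlow l hl hl0 hZcount hstep hεstep => ?_⟩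
  obtain ⟨-, hn⟩ := one_le_and_two_le_of_lt_mul (hαd.trans_lt hαn)
  choose a ha using hl
  obtain rfl : l = fun k => (2 : ℝ) ^ (-(a k : ℤ)) := funext ha
  have ha0 : a 0 = 0 := by
    simpa using pow_right_injective₀ two_pos (by norm_num)
      (by simpa using hl0 : (2 : ℝ) ^ a 0 = 2 ^ 0)
  simp only [forall_one_le_iff, Nat.add_sub_cancel] at hZcount hstep hεstep
  choose ρ hbρ hρA hbudget hscale using fun k =>
    exists_intermediate_scale hαd hαn (hstep k) (hεstep k)
  have hZpos : ∀ k, 0 < cubeCount ((2 : ℝ) ^ (-(a k : ℤ))) (Zk k) := fun k => by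
    have := hZlow k _ ⟨a k, rfl⟩ (zpow_le_one_of_nonpos₀ one_le_two (by omega))
    exact_mod_cast (Real.rpow_pos_of_pos (by positivity) _).trans_le this
  choose Bad hBad_card hBad_inj hBad using fun k => exists_finset_rows_stronglyNonDiagonal _ (hZpos (k + 1))
  obtain ⟨S, hS0, hS⟩ := exists_nested_index_sets (by omega) a ρ hbρ hρA Bad hBad_inj fun k =>
    hbudget k _ ((Nat.cast_le.2 (hBad_card k)).trans (hZcount k))
  refine ⟨fun k => cubeUnion (a k) (S k), fun k => 2 ^ (-(ρ (k - 1) : ℤ)), ?_⟩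
  simp only [forall_one_le_iff, Nat.add_sub_cancel]
  refine ⟨by rw [ha0, hS0, cubeUnion_zero_singleton_zero], fun k => ?_, fun k M hSND hM => ?_,
    fun k => ?_, fun k m hm => ?_, fun k m _ => ?_⟩
  · exact ⟨cubeUnion_nonempty _ (hS (k + 1)).1, ⟨S (k + 1), rfl⟩,
      cubeUnion_subset_cubeUnion ((hbρ k).trans (hρA k)) (hS k).2.1⟩
  · exact not_dyadicCube_subset_nthPower ((hS k).2.2.2.2 _ (hBad k M hM hSND))
  · exact ⟨⟨ρ k, rfl⟩, two_zpow_neg_antitone (hρA k), two_zpow_neg_antitone (hbρ k), hscale k⟩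
  · rw [cubesMeeting_cubeUnion] at hm
    rw [cubeCount_cubeUnion_inter ((hbρ k).trans (hρA k)), two_zpow_neg_div_two_zpow_neg (hbρ k)]
    have := (Nat.cast_le (α := ℝ)).2 ((hS k).2.2.1 m hm)
    push_cast at this
    linarith
  · rw [cubeCount_cubeUnion_inter (hρA k)]
    exact (hS k).2.2.2.1 m

/-- **Lemma 3.2 (construction of the nested sets `X_k`).** -/
theorem nested_construction (d n : ℕ) (hd : 1 ≤ d) (hn : 2 ≤ n) :
    ∃ C : ℝ, 0 < C ∧
      ∀ (α : ℝ), (d : ℝ) ≤ α → α < (d : ℝ) * n →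
      ∀ (ε : ℕ → ℝ), (∀ k, 0 < ε k) → (∀ k, 0 < (d : ℝ) * n - α - 2 * ε k) →
      ∀ (Zk : ℕ → Set (Fin n × Fin d → ℝ)),
        (∀ k, ∀ l : ℝ, IsDyadicLength l → l ≤ 1 →
          l ^ (-(d : ℝ)) ≤ (cubeCount l (Zk k) : ℝ)) →
      ∀ (l : ℕ → ℝ), (∀ k, IsDyadicLength (l k)) → l 0 = 1 →
        (∀ k, 1 ≤ k → (cubeCount (l k) (Zk k) : ℝ) ≤ (l k) ^ (-α - ε k / 2)) →
        (∀ k, 1 ≤ k → (l k) ^ ((d : ℝ) * n - α - ε k) ≤ (1 / 2) * (l (k - 1)) ^ ((d : ℝ) * n)) →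
        (∀ k, 1 ≤ k → (l k) ^ (ε k) ≤ (l (k - 1)) ^ (2 * (d : ℝ))) →
      ∃ X : ℕ → Set (Fin d → ℝ), ∃ r : ℕ → ℝ,
        X 0 = unitCube d ∧
        (∀ k, 1 ≤ k → (X k).Nonempty ∧ IsCubeUnion (l k) (X k) ∧ X k ⊆ X (k - 1)) ∧
        -- avoidance of strongly non-diagonal cubes of `B_{l_k}^{dn}(Z_k)`
        (∀ k, 1 ≤ k → ∀ M : Fin n × Fin d → ℤ, StronglyNonDiagonal M →
          M ∈ cubesMeeting (l k) (Zk k) → ¬ dyadicCube (l k) M ⊆ nthPower (X k)) ∧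
        -- the intermediate scales
        (∀ k, 1 ≤ k → IsDyadicLength (r k) ∧ l k ≤ r k ∧ r k ≤ l (k - 1) ∧
          r k ≤ C * (l k) ^ (((d : ℝ) * n - α - ε k) / ((d : ℝ) * ((n : ℝ) - 1)))) ∧
        -- large size
        (∀ k, 1 ≤ k → ∀ m ∈ cubesMeeting (l (k - 1)) (X (k - 1)),
          (1 / 2) * (l (k - 1) / r k) ^ d ≤
            (cubeCount (l k) (X k ∩ dyadicCube (l (k - 1)) m) : ℝ)) ∧
        -- non-concentration
        (∀ k, 1 ≤ k → ∀ m' ∈ cubesMeeting (r k) (X (k - 1)),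
          cubeCount (l k) (X k ∩ dyadicCube (r k) m') ≤ 1) :=
  nested_construction_general d n

end
end

section
/- Let n ≥ 2 be an integer and let g : [0,1] → ℝ^{n−1} be a Lipschitz function. Write P(t) = (t, g(t)) ∈ ℝ^n. Then there exists a set X ⊆ [0,1] with Hausdorff dimension at least 1/2 such that for all pairwise distinct t_1, t_2, t_3 ∈ X one has ‖P(t_3) − P(t_1)‖ ≠ ‖P(t_3) − P(t_2)‖ (Euclidean norm); in particular, no three points of the graph {(t, g(t)) : t ∈ X} form the vertices of an isosceles triangle. -/
open Filter Set

noncomputable section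

/-- The point `(t, g t) ∈ ℝ^{m+1}` on the graph of `g : ℝ → ℝ^m`. -/
def graphPoint {m : ℕ} (g : ℝ → EuclideanSpace ℝ (Fin m)) (t : ℝ) :
    EuclideanSpace ℝ (Fin (m + 1)) :=
  (WithLp.equiv 2 (Fin (m + 1) → ℝ)).symm (Fin.cons t (WithLp.equiv 2 (Fin m → ℝ) (g t)))

/-!
By Rademacher's theorem `g` is differentiable almost everywhere, so for any `η > 0` there are a
slope `v`, a scale `ρ` and a set `A ⊆ [0, 1]` of positive measure such that
`‖g z - g a - (z - a) • v‖ ≤ η |z - a|` whenever `a ∈ A` and `|z - a| ≤ ρ`.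

Inside an interval of length `ρ` meeting `A` in positive measure we build a Cantor set `X`: every
kept cell is cut into `N = 65536 = 256²` equal pieces, and we keep the pieces of positive
`A`-mass whose index lies in one translate of `B = 3 • {ternary numbers with digits 0, 1}`, a
set of `512` digits without three-term progressions. Averaging over the translates, the kept
pieces carry at least `512 / 2N = N ^ (-1/2)` of the mass of their parent. Splitting weight in
proportion to mass, a cell of depth `k` gets weight `O(256 ^ (-k))`, the square root of its
length up to a constant, so the distribution function of the weights is a `1/2`-Hölder map
from `X` onto `[0, 1)` and `dimH X ≥ 1/2`.

Two points of `X` are first separated inside a kept cell containing a point of `A`, so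
`t ↦ g t - t • v` is `65536 η`-Lipschitz on `X`. For three points of `X`, the digits `a, b, c`
where they first split satisfy `|a + b - 2c| ≥ 3`, so `t₃` stays far from the midpoint of
`t₁, t₂`, whereas on a nearly affine curve an isosceles triangle with apex over `t₃` forces `t₃`
close to that midpoint.
-/

open MeasureTheory Topology
open scoped NNReal ENNReal

theorem exists_measure_inter_ne_zero_of_subset_biUnion {α ι : Type*} [MeasurableSpace α]
    {μ : Measure α} {I : Set ι} (hI : I.Countable) {A : Set α} {B : ι → Set α}
    (hA : μ A ≠ 0) (hcover : A ⊆ ⋃ i ∈ I, B i) : ∃ i ∈ I, μ (A ∩ B i) ≠ 0 := by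
  by_contra! h
  refine hA (measure_mono_null (fun x hx => ?_) ((measure_biUnion_null_iff hI).2 h))
  obtain ⟨i, hi, hxi⟩ := mem_iUnion₂.1 (hcover hx)
  exact mem_iUnion₂.2 ⟨i, hi, hx, hxi⟩

theorem exists_measure_ne_zero_dist_lt {α E : Type*} [MeasurableSpace α] {μ : Measure α}
    [PseudoMetricSpace E] [TopologicalSpace.SeparableSpace E] (f : α → E) {S : Set α}
    (hS : μ S ≠ 0) {ε : ℝ} (hε : 0 < ε) :
    ∃ x₀ ∈ S, μ {x ∈ S | dist (f x) (f x₀) < ε} ≠ 0 := by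
  obtain ⟨T, hT, hTdense⟩ := TopologicalSpace.exists_countable_dense E
  have hcover : S ⊆ ⋃ q ∈ T, f ⁻¹' Metric.ball q (ε / 2) := fun x _ => by
    obtain ⟨q, hq, hqT⟩ := Metric.dense_iff.1 hTdense (f x) (ε / 2) (half_pos hε)
    exact mem_iUnion₂.2 ⟨q, hqT, Metric.mem_ball'.1 hq⟩
  obtain ⟨q, -, hq⟩ := exists_measure_inter_ne_zero_of_subset_biUnion hT hS hcover
  obtain ⟨x₀, hx₀S, hx₀q⟩ := nonempty_of_measure_ne_zero hq
  refine ⟨x₀, hx₀S, fun h0 => hq (measure_mono_null ?_ h0)⟩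
  rintro x ⟨hxS, hxq⟩
  refine ⟨hxS, ?_⟩
  calc dist (f x) (f x₀) ≤ dist (f x) q + dist (f x₀) q := dist_triangle_right _ _ _
    _ < ε / 2 + ε / 2 := add_lt_add hxq hx₀q
    _ = ε := add_halves ε

theorem Icc_subset_biUnion_Icc (a u : ℝ) (n : ℕ) :
    Icc a (a + (n + 1) * u) ⊆ ⋃ i ∈ Finset.range (n + 1), Icc (a + i * u) (a + i * u + u) := by
  induction n with
  | zero => simp
  | succ n ih =>
    intro x hx
    rcases le_total x (a + (n + 1) * u) with h | h
    · exact biUnion_subset_biUnion_left (by simp) (ih ⟨hx.1, h⟩)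
    · refine mem_biUnion (x := n + 1) (by simp) ⟨?_, ?_⟩ <;> push_cast at hx ⊢ <;> linarith [hx.2]

theorem exists_mem_Ico_sum_filter_lt {α : Type*} [LinearOrder α] (S : Finset α) (g : α → ℝ)
    {y : ℝ} (hy₀ : 0 ≤ y) (hy : y < ∑ i ∈ S, g i) :
    ∃ i ∈ S, y ∈ Ico (∑ j ∈ S with j < i, g j) (∑ j ∈ S with j < i, g j + g i) := by
  classical
  induction S using Finset.induction_on_max generalizing y with
  | empty => simp at hy; linarith
  | insert a s ha ih =>
    have hfilter : ∀ i ∈ s, (insert a s).filter (· < i) = s.filter (· < i) := fun i hi => by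
      rw [Finset.filter_insert, if_neg (not_lt.2 (ha i hi).le)]
    have hs : (insert a s).filter (· < a) = s := by
      rw [Finset.filter_insert, if_neg (lt_irrefl a), Finset.filter_true_of_mem ha]
    rw [Finset.sum_insert fun has => lt_irrefl a (ha a has)] at hy
    by_cases hys : y < ∑ i ∈ s, g i
    · obtain ⟨i, hi, hyi⟩ := ih hy₀ hys
      exact ⟨i, Finset.mem_insert_of_mem hi, by rwa [hfilter i hi]⟩
    · exact ⟨a, Finset.mem_insert_self a s, by rw [hs]; constructor <;> linarith⟩

theorem sub_mul_add_mul_one_add_norm_sq_eq {E : Type*} [NormedAddCommGroup E]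
    [InnerProductSpace ℝ E] {v ε₁ ε₂ : E} {s₁ s₂ : ℝ}
    (h : s₁ ^ 2 + ‖s₁ • v + ε₁‖ ^ 2 = s₂ ^ 2 + ‖s₂ • v + ε₂‖ ^ 2) :
    (s₁ - s₂) * (s₁ + s₂) * (1 + ‖v‖ ^ 2) = (s₂ - s₁) * inner ℝ v (ε₁ + ε₂)
      - (s₁ + s₂) * inner ℝ v (ε₁ - ε₂) - inner ℝ (ε₁ - ε₂) (ε₁ + ε₂) := by
  have hexpand : ∀ (s : ℝ) (ε : E),
      ‖s • v + ε‖ ^ 2 = s ^ 2 * ‖v‖ ^ 2 + 2 * (s * inner ℝ v ε) + ‖ε‖ ^ 2 := fun s ε => by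
    rw [norm_add_sq_real, norm_smul, real_inner_smul_left, Real.norm_eq_abs, mul_pow, sq_abs]
  rw [hexpand, hexpand] at h
  simp only [inner_add_right, inner_sub_right, inner_sub_left, real_inner_self_eq_norm_sq,
    real_inner_comm ε₁ ε₂]
  linear_combination h

/-- An isosceles triangle `φ t₁, φ t₂` with apex `φ t₃` on a curve `φ s = s • v + ε s` with
`ε` `δ`-Lipschitz has its apex nearly above the midpoint of `t₁, t₂`; here `sᵢ = t₃ - tᵢ`. -/
theorem abs_add_le_of_sq_add_norm_sq_eq {E : Type*} [NormedAddCommGroup E]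
    [InnerProductSpace ℝ E] {v ε₁ ε₂ : E} {s₁ s₂ δ : ℝ} (h₁ : ‖ε₁‖ ≤ δ * |s₁|)
    (h₂ : ‖ε₂‖ ≤ δ * |s₂|) (h₁₂ : ‖ε₁ - ε₂‖ ≤ δ * |s₁ - s₂|) (hs : s₁ ≠ s₂)
    (h : s₁ ^ 2 + ‖s₁ • v + ε₁‖ ^ 2 = s₂ ^ 2 + ‖s₂ • v + ε₂‖ ^ 2) :
    |s₁ + s₂| ≤ δ * (2 * ‖v‖ + δ) * (|s₁| + |s₂|) := by
  have hsum : ‖ε₁ + ε₂‖ ≤ δ * (|s₁| + |s₂|) := by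
    rw [mul_add]; exact (norm_add_le _ _).trans (add_le_add h₁ h₂)
  have hsum' : |s₁ + s₂| ≤ |s₁| + |s₂| := abs_add_le _ _
  have hd : 0 < |s₁ - s₂| := abs_pos.2 (sub_ne_zero.2 hs)
  have hδ : 0 ≤ δ := nonneg_of_mul_nonneg_left ((norm_nonneg _).trans h₁₂) hd
  have a₁ : |s₁ - s₂| * (‖v‖ * ‖ε₁ + ε₂‖) ≤ |s₁ - s₂| * (‖v‖ * (δ * (|s₁| + |s₂|))) := by
    gcongr
  have a₂ : |s₁ + s₂| * (‖v‖ * ‖ε₁ - ε₂‖) ≤ (|s₁| + |s₂|) * (‖v‖ * (δ * |s₁ - s₂|)) := by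
    gcongr
  have a₃ : ‖ε₁ - ε₂‖ * ‖ε₁ + ε₂‖ ≤ (δ * |s₁ - s₂|) * (δ * (|s₁| + |s₂|)) :=
    mul_le_mul h₁₂ hsum (norm_nonneg _) (by positivity)
  refine le_of_mul_le_mul_left ?_ hd
  calc |s₁ - s₂| * |s₁ + s₂| ≤ |(s₁ - s₂) * (s₁ + s₂) * (1 + ‖v‖ ^ 2)| := by
        rw [abs_mul, abs_mul, abs_of_pos (by positivity : (0:ℝ) < 1 + ‖v‖ ^ 2)]
        exact le_mul_of_one_le_right (by positivity) (le_add_of_nonneg_right (by positivity))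
    _ ≤ |s₁ - s₂| * (‖v‖ * ‖ε₁ + ε₂‖) + |s₁ + s₂| * (‖v‖ * ‖ε₁ - ε₂‖)
        + ‖ε₁ - ε₂‖ * ‖ε₁ + ε₂‖ := by
        rw [sub_mul_add_mul_one_add_norm_sq_eq h]
        refine (abs_sub _ _).trans (add_le_add ((abs_sub _ _).trans (add_le_add ?_ ?_))
          (abs_real_inner_le_norm _ _))
        · rw [abs_mul, abs_sub_comm]
          exact mul_le_mul_of_nonneg_left (abs_real_inner_le_norm _ _) (abs_nonneg _)
        · rw [abs_mul]; exact mul_le_mul_of_nonneg_left (abs_real_inner_le_norm _ _) (abs_nonneg _)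
    _ ≤ |s₁ - s₂| * (δ * (2 * ‖v‖ + δ) * (|s₁| + |s₂|)) := by linarith

theorem holderOnWith_of_dist_le {X Y : Type*} [PseudoMetricSpace X] [PseudoMetricSpace Y]
    {C r : ℝ≥0} {f : X → Y} {s : Set X}
    (h : ∀ x ∈ s, ∀ y ∈ s, dist (f x) (f y) ≤ C * dist x y ^ (r : ℝ)) :
    HolderOnWith C r f s := fun x hx y hy => by
  rw [edist_dist, edist_dist, ← ENNReal.ofReal_coe_nnreal,
    ENNReal.ofReal_rpow_of_nonneg dist_nonneg r.coe_nonneg, ← ENNReal.ofReal_mul C.coe_nonneg]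
  exact ENNReal.ofReal_le_ofReal (h x hx y hy)

theorem le_dimH_of_holderOnWith_of_Ico_subset_image {s : Set ℝ} {f : ℝ → ℝ} {C r : ℝ≥0}
    (hr : 0 < r) (hf : HolderOnWith C r f s) (himage : Ico 0 1 ⊆ f '' s) :
    (r : ℝ≥0∞) ≤ dimH s := by
  have hIco : dimH (Ico (0:ℝ) 1) = 1 := by
    rw [Real.dimH_of_nonempty_interior] <;> simp
  have h := (dimH_mono himage).trans (hf.dimH_image_le hr)
  rwa [hIco, ENNReal.le_div_iff_mul_le (Or.inl (by simpa using hr.ne')) (Or.inl ENNReal.coe_ne_top),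
    one_mul] at h

section Digits

/-- `stanley n` has the binary digits of `n` as its ternary digits. -/
def stanley : ℕ → ℕ
  | 0 => 0
  | n + 1 => 3 * stanley ((n + 1) / 2) + (n + 1) % 2

theorem stanley_eq (n : ℕ) : stanley n = 3 * stanley (n / 2) + n % 2 := by
  cases n <;> simp [stanley]

theorem stanley_lt_three_pow {k n : ℕ} (hn : n < 2 ^ k) : stanley n < 3 ^ k := by
  induction k generalizing n with
  | zero => simp_all [stanley]
  | succ k ih =>
    have := ih (n := n / 2) (by omega)
    rw [stanley_eq, pow_succ]
    omega

/-- Ternary digits in `{0, 1}` admit no carries, so `x + y = 2 z` digitwise forces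
`x = y = z`. -/
theorem stanley_add_eq_two_mul {x y z : ℕ} (h : stanley x + stanley y = 2 * stanley z) :
    x = z ∧ y = z := by
  induction hn : x + y + z using Nat.strong_induction_on generalizing x y z with
  | _ n ih =>
    rw [stanley_eq x, stanley_eq y, stanley_eq z] at h
    rcases Nat.eq_zero_or_pos n with rfl | hn₀
    · omega
    · have := ih _ (by omega) (x := x / 2) (y := y / 2) (z := z / 2) (by omega) rfl
      omega

theorem stanley_injective : Function.Injective stanley := fun a b h =>
  (stanley_add_eq_two_mul (by rw [h, two_mul])).1

def apFreeDigits : Finset ℕ := (Finset.range 512).image fun n => 3 * stanley n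

theorem card_apFreeDigits : apFreeDigits.card = 512 := by
  rw [apFreeDigits, Finset.card_image_of_injective _ fun a b h => stanley_injective (by omega),
    Finset.card_range]

theorem lt_of_mem_apFreeDigits {b : ℕ} (hb : b ∈ apFreeDigits) : b < 65536 := by
  obtain ⟨n, hn, rfl⟩ := Finset.mem_image.1 hb
  have := stanley_lt_three_pow (k := 9) (Finset.mem_range.1 hn)
  omega

theorem three_le_abs_add_sub_two_mul_of_mem_apFreeDigits {a b c : ℕ} (ha : a ∈ apFreeDigits)
    (hb : b ∈ apFreeDigits) (hc : c ∈ apFreeDigits) (h : ¬(a = c ∧ b = c)) :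
    3 ≤ |(a : ℤ) + b - 2 * c| := by
  obtain ⟨x, -, rfl⟩ := Finset.mem_image.1 ha
  obtain ⟨y, -, rfl⟩ := Finset.mem_image.1 hb
  obtain ⟨z, -, rfl⟩ := Finset.mem_image.1 hc
  have hne : stanley x + stanley y ≠ 2 * stanley z := fun he => by
    obtain ⟨rfl, rfl⟩ := stanley_add_eq_two_mul he
    exact h ⟨rfl, rfl⟩
  rw [le_abs]
  omega

/-- The translate `B + τ - N`, cut down to `[0, N)`. -/
def digitClass (N : ℕ) (B : Finset ℕ) (τ : ℕ) : Finset ℕ :=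
  (Finset.range N).filter fun i => ∃ b ∈ B, i + N = b + τ

variable {N : ℕ} {B : Finset ℕ}

theorem card_filter_range_exists_add_eq (hB : ∀ b ∈ B, b < N) {i : ℕ} (hi : i < N) :
    ((Finset.range (2 * N)).filter fun τ => ∃ b ∈ B, i + N = b + τ).card = B.card := by
  refine Finset.card_bij (fun τ _ => i + N - τ) (fun τ hτ => ?_) (fun τ₁ h₁ τ₂ h₂ he => ?_)
    (fun b hb => ⟨i + N - b, ?_, ?_⟩)
  · obtain ⟨-, b, hb, hbτ⟩ := Finset.mem_filter.1 hτ
    rwa [show i + N - τ = b by omega]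
  · obtain ⟨-, b₁, -, h₁⟩ := Finset.mem_filter.1 h₁
    obtain ⟨-, b₂, -, h₂⟩ := Finset.mem_filter.1 h₂
    omega
  · have := hB b hb
    exact Finset.mem_filter.2 ⟨Finset.mem_range.2 (by omega), b, hb, by omega⟩
  · have := hB b hb
    omega

/-- Every digit lies in exactly `#B` of the `2N` classes, so some class carries at least the
average share. -/
theorem exists_sum_digitClass_ge (hB : ∀ b ∈ B, b < N) (f : ℕ → ℝ) :
    ∃ τ, B.card * ∑ i ∈ Finset.range N, f i ≤ 2 * N * ∑ i ∈ digitClass N B τ, f i := by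
  rcases N.eq_zero_or_pos with rfl | hN
  · exact ⟨0, by simp⟩
  have hdouble : ∑ τ ∈ Finset.range (2 * N), ∑ i ∈ digitClass N B τ, f i =
      B.card * ∑ i ∈ Finset.range N, f i := by
    simp only [digitClass, Finset.sum_filter]
    rw [Finset.sum_comm, Finset.mul_sum]
    refine Finset.sum_congr rfl fun i hi => ?_
    rw [← Finset.sum_filter, Finset.sum_const,
      card_filter_range_exists_add_eq hB (Finset.mem_range.1 hi), nsmul_eq_mul, mul_comm]
  obtain ⟨τ, -, hτ⟩ := Finset.exists_le_of_sum_le (s := Finset.range (2 * N))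
    (f := fun _ => (B.card * ∑ i ∈ Finset.range N, f i) / (2 * N))
    (g := fun τ => ∑ i ∈ digitClass N B τ, f i) (by simp; omega) (by
      rw [hdouble, Finset.sum_const, Finset.card_range, nsmul_eq_mul]
      push_cast
      exact (mul_div_cancel₀ _ (by positivity)).le)
  refine ⟨τ, ?_⟩
  rw [div_le_iff₀ (by positivity)] at hτ
  linarith

end Digits

structure RootCell where
  A : Set ℝ
  left : ℝ
  len : ℝ
  len_pos : 0 < len
  volume_ne_zero : volume (A ∩ Icc left (left + len)) ≠ 0

namespace RootCell

variable (R : RootCell)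

def cellLen (k : ℕ) : ℝ := R.len / 65536 ^ k

/-- Cells are addressed by digit lists, the last digit chosen at the head. -/
def cellLeft : List ℕ → ℝ
  | [] => R.left
  | i :: p => cellLeft p + i * R.cellLen (p.length + 1)

def cell (p : List ℕ) : Set ℝ := Icc (R.cellLeft p) (R.cellLeft p + R.cellLen p.length)

def mass (p : List ℕ) : ℝ := volume.real (R.A ∩ R.cell p)

def shift (p : List ℕ) : ℕ :=
  (exists_sum_digitClass_ge (fun _ => lt_of_mem_apFreeDigits) fun i => R.mass (i :: p)).choose

def digits (p : List ℕ) : Finset ℕ :=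
  (digitClass 65536 apFreeDigits (R.shift p)).filter fun i => 0 < R.mass (i :: p)

def digitsMass (p : List ℕ) : ℝ := ∑ i ∈ R.digits p, R.mass (i :: p)

def IsAlive : List ℕ → Prop
  | [] => True
  | i :: p => i ∈ R.digits p ∧ IsAlive p

def cantorSet : Set ℝ := {x | ∀ k, ∃ p : List ℕ, p.length = k ∧ R.IsAlive p ∧ x ∈ R.cell p}

variable {R}

theorem cellLen_pos (k : ℕ) : 0 < R.cellLen k := div_pos R.len_pos (by positivity)

theorem cellLen_eq_mul_cellLen_succ (k : ℕ) : R.cellLen k = 65536 * R.cellLen (k + 1) := by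
  rw [cellLen, cellLen, pow_succ]; field_simp

theorem cellLen_le_len (k : ℕ) : R.cellLen k ≤ R.len :=
  div_le_self R.len_pos.le (one_le_pow₀ (by norm_num))

theorem exists_cellLen_lt {d : ℝ} (hd : 0 < d) : ∃ k, R.cellLen k < d := by
  obtain ⟨k, hk⟩ := pow_unbounded_of_one_lt (R.len / d) (by norm_num : (1:ℝ) < 65536)
  exact ⟨k, by rw [cellLen, div_lt_iff₀ (by positivity)]; rwa [div_lt_iff₀ hd, mul_comm] at hk⟩

theorem cell_nil : R.cell [] = Icc R.left (R.left + R.len) := by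
  simp [cell, cellLeft, cellLen]

theorem cell_cons (i : ℕ) (p : List ℕ) : R.cell (i :: p) =
    Icc (R.cellLeft p + i * R.cellLen (p.length + 1))
      (R.cellLeft p + i * R.cellLen (p.length + 1) + R.cellLen (p.length + 1)) := rfl

theorem cell_cons_subset {i : ℕ} (hi : i < 65536) (p : List ℕ) : R.cell (i :: p) ⊆ R.cell p := by
  have hu := R.cellLen_pos (p.length + 1)
  have hi' : (i : ℝ) + 1 ≤ 65536 := by exact_mod_cast hi
  rw [cell_cons, cell, cellLen_eq_mul_cellLen_succ p.length]
  exact Icc_subset_Icc (by nlinarith) (by nlinarith)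

theorem cell_subset_biUnion_cell_cons (p : List ℕ) :
    R.cell p ⊆ ⋃ i ∈ Finset.range 65536, R.cell (i :: p) := by
  have h := Icc_subset_biUnion_Icc (R.cellLeft p) (R.cellLen (p.length + 1)) 65535
  rwa [show ((65535 : ℕ) : ℝ) + 1 = 65536 by norm_num, ← cellLen_eq_mul_cellLen_succ] at h

theorem abs_sub_le_cellLen {p : List ℕ} {x y : ℝ} (hx : x ∈ R.cell p) (hy : y ∈ R.cell p) :
    |x - y| ≤ R.cellLen p.length :=
  abs_sub_le_iff.2 ⟨by linarith [hx.2, hy.1], by linarith [hx.1, hy.2]⟩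

theorem abs_sub_sub_mul_cellLen_le {p : List ℕ} {i j : ℕ} {x y : ℝ} (hx : x ∈ R.cell (i :: p))
    (hy : y ∈ R.cell (j :: p)) :
    |(y - x) - ((j : ℝ) - i) * R.cellLen (p.length + 1)| ≤ R.cellLen (p.length + 1) := by
  rw [cell_cons] at hx hy
  exact abs_sub_le_iff.2 ⟨by linarith [hx.1, hy.2], by linarith [hx.2, hy.1]⟩

theorem volume_inter_cell_ne_top (p : List ℕ) : volume (R.A ∩ R.cell p) ≠ ⊤ :=
  ((measure_mono inter_subset_right).trans_lt measure_Icc_lt_top).ne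

theorem mass_le_cellLen (p : List ℕ) : R.mass p ≤ R.cellLen p.length := by
  calc R.mass p ≤ volume.real (R.cell p) :=
        measureReal_mono inter_subset_right measure_Icc_lt_top.ne
    _ = R.cellLen p.length := by
      rw [cell, Real.volume_real_Icc_of_le (by linarith [R.cellLen_pos p.length])]; ring

theorem mass_le_sum_mass_cons (p : List ℕ) :
    R.mass p ≤ ∑ i ∈ Finset.range 65536, R.mass (i :: p) := by
  calc R.mass p ≤ volume.real (⋃ i ∈ Finset.range 65536, R.A ∩ R.cell (i :: p)) := by
        refine measureReal_mono ?_ (measure_biUnion_finset_le _ _ |>.trans_lt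
          (ENNReal.sum_lt_top.2 fun i _ => (volume_inter_cell_ne_top _).lt_top)).ne
        rw [← inter_iUnion₂]
        exact inter_subset_inter_right _ (cell_subset_biUnion_cell_cons p)
    _ ≤ _ := measureReal_biUnion_finset_le _ _

theorem mem_digits {i : ℕ} {p : List ℕ} : i ∈ R.digits p ↔
    (i < 65536 ∧ ∃ b ∈ apFreeDigits, i + 65536 = b + R.shift p) ∧ 0 < R.mass (i :: p) := by
  simp [digits, digitClass]

theorem lt_of_mem_digits {i : ℕ} {p : List ℕ} (hi : i ∈ R.digits p) : i < 65536 :=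
  (mem_digits.1 hi).1.1

theorem three_le_abs_add_sub_two_mul_of_mem_digits {p : List ℕ} {a b c : ℕ}
    (ha : a ∈ R.digits p) (hb : b ∈ R.digits p) (hc : c ∈ R.digits p) (h : ¬(a = c ∧ b = c)) :
    3 ≤ |(a : ℤ) + b - 2 * c| := by
  obtain ⟨⟨-, α, hα, hαa⟩, -⟩ := mem_digits.1 ha
  obtain ⟨⟨-, β, hβ, hβb⟩, -⟩ := mem_digits.1 hb
  obtain ⟨⟨-, γ, hγ, hγc⟩, -⟩ := mem_digits.1 hc
  have := three_le_abs_add_sub_two_mul_of_mem_apFreeDigits hα hβ hγ (by omega)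
  rwa [show (a : ℤ) + b - 2 * c = α + β - 2 * γ by omega]

theorem two_mul_cellLen_le_abs_sub {p : List ℕ} {i j : ℕ} (hi : i ∈ R.digits p)
    (hj : j ∈ R.digits p) (hij : i ≠ j) {x y : ℝ} (hx : x ∈ R.cell (i :: p))
    (hy : y ∈ R.cell (j :: p)) : 2 * R.cellLen (p.length + 1) ≤ |x - y| := by
  have h3 := three_le_abs_add_sub_two_mul_of_mem_digits hi hj hi (by omega)
  rw [show (i : ℤ) + j - 2 * i = j - i by ring] at h3
  have h3' : (3 : ℝ) ≤ |(j : ℝ) - i| := by exact_mod_cast h3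
  have hu := R.cellLen_pos (p.length + 1)
  have h4 : 3 * R.cellLen (p.length + 1) ≤ |((j : ℝ) - i) * R.cellLen (p.length + 1)| := by
    rw [abs_mul, abs_of_pos hu]; nlinarith
  have h5 := abs_sub_abs_le_abs_sub (((j : ℝ) - i) * R.cellLen (p.length + 1)) (y - x)
  rw [abs_sub_comm _ (y - x)] at h5
  rw [abs_sub_comm]
  linarith [abs_sub_sub_mul_cellLen_le hx hy]

theorem mass_nonneg (p : List ℕ) : 0 ≤ R.mass p := measureReal_nonneg

theorem digitsMass_nonneg (p : List ℕ) : 0 ≤ R.digitsMass p :=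
  Finset.sum_nonneg fun _ _ => mass_nonneg _

theorem mass_le_mul_digitsMass (p : List ℕ) : R.mass p ≤ 256 * R.digitsMass p := by
  have hτ : (apFreeDigits.card : ℝ) * ∑ i ∈ Finset.range 65536, R.mass (i :: p) ≤
      2 * (65536 : ℕ) * ∑ i ∈ digitClass 65536 apFreeDigits (R.shift p), R.mass (i :: p) :=
    (exists_sum_digitClass_ge (fun _ => lt_of_mem_apFreeDigits)
      fun i => R.mass (i :: p)).choose_spec
  have hfilter :
      R.digitsMass p = ∑ i ∈ digitClass 65536 apFreeDigits (R.shift p), R.mass (i :: p) :=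
    Finset.sum_filter_of_ne fun i _ hi => (mass_nonneg _).lt_of_ne hi.symm
  rw [card_apFreeDigits] at hτ
  push_cast at hτ
  linarith [mass_le_sum_mass_cons (R := R) p]

theorem IsAlive.mass_pos {p : List ℕ} (hp : R.IsAlive p) : 0 < R.mass p := by
  cases p with
  | nil =>
    exact ENNReal.toReal_pos (by rw [cell_nil]; exact R.volume_ne_zero) (volume_inter_cell_ne_top _)
  | cons i p => exact (mem_digits.1 hp.1).2

theorem IsAlive.volume_ne_zero {p : List ℕ} (hp : R.IsAlive p) : volume (R.A ∩ R.cell p) ≠ 0 :=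
  fun h => hp.mass_pos.ne' (by rw [mass, measureReal_def, h, ENNReal.toReal_zero])

theorem IsAlive.cell_subset {p : List ℕ} (hp : R.IsAlive p) :
    R.cell p ⊆ Icc R.left (R.left + R.len) := by
  induction p with
  | nil => exact cell_nil.subset
  | cons i p ih => exact (cell_cons_subset (lt_of_mem_digits hp.1) p).trans (ih hp.2)

theorem cantorSet_subset : R.cantorSet ⊆ Icc R.left (R.left + R.len) := fun x hx => by
  obtain ⟨p, -, hp, hxp⟩ := hx 0
  exact hp.cell_subset hxp

theorem eq_of_mem_cell {p q : List ℕ} (hp : R.IsAlive p) (hq : R.IsAlive q)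
    (hpq : p.length = q.length) {x : ℝ} (hxp : x ∈ R.cell p) (hxq : x ∈ R.cell q) : p = q := by
  induction p generalizing q with
  | nil => exact (List.length_eq_zero_iff.1 hpq.symm).symm
  | cons i p ih =>
    obtain _ | ⟨j, q⟩ := q
    · simp at hpq
    have hpq' : p = q := ih hp.2 hq.2 (by simpa using hpq)
      (cell_cons_subset (lt_of_mem_digits hp.1) p hxp)
      (cell_cons_subset (lt_of_mem_digits hq.1) q hxq)
    subst hpq'
    by_contra hij
    have := two_mul_cellLen_le_abs_sub hp.1 hq.1 (fun h => hij (h ▸ rfl)) hxp hxq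
    rw [sub_self, abs_zero] at this
    linarith [R.cellLen_pos (p.length + 1)]

open Classical in
variable (R) in
def address (x : ℝ) (k : ℕ) : List ℕ :=
  if h : ∃ p : List ℕ, p.length = k ∧ R.IsAlive p ∧ x ∈ R.cell p then h.choose else []

section Address

variable {x : ℝ} (hx : x ∈ R.cantorSet)
include hx

theorem address_spec (k : ℕ) : (R.address x k).length = k ∧ R.IsAlive (R.address x k) ∧
    x ∈ R.cell (R.address x k) := by
  rw [address, dif_pos (hx k)]
  exact (hx k).choose_spec

theorem address_eq {p : List ℕ} (hp : R.IsAlive p) (hxp : x ∈ R.cell p) :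
    R.address x p.length = p :=
  have h := address_spec hx p.length
  eq_of_mem_cell h.2.1 hp h.1 h.2.2 hxp

theorem address_zero : R.address x 0 = [] := List.length_eq_zero_iff.1 (address_spec hx 0).1

theorem address_succ (k : ℕ) :
    ∃ i ∈ R.digits (R.address x k), R.address x (k + 1) = i :: R.address x k := by
  obtain ⟨hlen, halive, hmem⟩ := address_spec hx (k + 1)
  rcases h : R.address x (k + 1) with _ | ⟨i, p⟩
  · simp [h] at hlen
  rw [h] at hlen halive hmem
  have hp := address_eq hx halive.2 (cell_cons_subset (lt_of_mem_digits halive.1) p hmem)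
  rw [show p.length = k by simpa using hlen] at hp
  exact ⟨i, hp ▸ halive.1, by rw [hp]⟩

end Address

theorem exists_cons_mem_cell₃ {t₁ t₂ t₃ : ℝ} (h₁ : t₁ ∈ R.cantorSet) (h₂ : t₂ ∈ R.cantorSet)
    (h₃ : t₃ ∈ R.cantorSet) (h₁₂ : t₁ ≠ t₂) :
    ∃ p, R.IsAlive p ∧ ∃ a ∈ R.digits p, ∃ b ∈ R.digits p, ∃ c ∈ R.digits p,
      ¬(a = c ∧ b = c) ∧ t₁ ∈ R.cell (a :: p) ∧ t₂ ∈ R.cell (b :: p) ∧ t₃ ∈ R.cell (c :: p) := by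
  let Agree (k : ℕ) : Prop := R.address t₁ k = R.address t₃ k ∧ R.address t₂ k = R.address t₃ k
  obtain ⟨k, hk, hk₁⟩ : ∃ k, ¬¬Agree k ∧ ¬Agree (k + 1) := by
    refine Nat.exists_not_and_succ_of_not_zero_of_exists (not_not.2 ?_) ?_
    · simp only [Agree, address_zero h₁, address_zero h₂, address_zero h₃, and_self]
    obtain ⟨k, hk⟩ := R.exists_cellLen_lt (abs_pos.2 (sub_ne_zero.2 h₁₂))
    refine ⟨k, fun ⟨e₁, e₂⟩ => hk.not_ge ?_⟩
    have := abs_sub_le_cellLen (e₁ ▸ (address_spec h₁ k).2.2) (e₂ ▸ (address_spec h₂ k).2.2)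
    rwa [(address_spec h₃ k).1] at this
  obtain ⟨e₁, e₂⟩ := not_not.1 hk
  obtain ⟨a, ha, hsa⟩ := address_succ h₁ k
  obtain ⟨b, hb, hsb⟩ := address_succ h₂ k
  obtain ⟨c, hc, hsc⟩ := address_succ h₃ k
  rw [e₁] at ha hsa
  rw [e₂] at hb hsb
  refine ⟨_, (address_spec h₃ k).2.1, a, ha, b, hb, c, hc, fun ⟨hac, hbc⟩ => hk₁ ?_,
    hsa ▸ (address_spec h₁ (k + 1)).2.2, hsb ▸ (address_spec h₂ (k + 1)).2.2,
    hsc ▸ (address_spec h₃ (k + 1)).2.2⟩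
  exact ⟨by rw [hsa, hsc, hac], by rw [hsb, hsc, hbc]⟩

theorem exists_cons_mem_cell₂ {x y : ℝ} (hx : x ∈ R.cantorSet) (hy : y ∈ R.cantorSet)
    (hxy : x ≠ y) : ∃ p, R.IsAlive p ∧ ∃ i ∈ R.digits p, ∃ j ∈ R.digits p,
      i ≠ j ∧ x ∈ R.cell (i :: p) ∧ y ∈ R.cell (j :: p) := by
  obtain ⟨p, hp, a, ha, b, hb, c, hc, habc, hxa, hyb, hxc⟩ := exists_cons_mem_cell₃ hx hy hx hxy
  have hac : a = c := by
    by_contra hac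
    have := two_mul_cellLen_le_abs_sub ha hc hac hxa hxc
    rw [sub_self, abs_zero] at this
    linarith [R.cellLen_pos (p.length + 1)]
  exact ⟨p, hp, a, ha, b, hb, fun hab => habc ⟨hac, hab ▸ hac⟩, hxa, hyb⟩

/-- The digits `a, b, c` of the first cells separating the points satisfy `|a + b - 2c| ≥ 3`. -/
theorem abs_sub_add_abs_sub_le_mul_abs {t₁ t₂ t₃ : ℝ} (h₁ : t₁ ∈ R.cantorSet)
    (h₂ : t₂ ∈ R.cantorSet) (h₃ : t₃ ∈ R.cantorSet) (h₁₂ : t₁ ≠ t₂) :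
    |t₃ - t₁| + |t₃ - t₂| ≤ 131072 * |t₁ + t₂ - 2 * t₃| := by
  obtain ⟨p, -, a, ha, b, hb, c, hc, habc, ht₁, ht₂, ht₃⟩ := exists_cons_mem_cell₃ h₁ h₂ h₃ h₁₂
  have hcell : ∀ {i t}, i ∈ R.digits p → t ∈ R.cell (i :: p) → t ∈ R.cell p :=
    fun hi ht => cell_cons_subset (lt_of_mem_digits hi) p ht
  have d₁ := abs_sub_le_cellLen (hcell hc ht₃) (hcell ha ht₁)
  have d₂ := abs_sub_le_cellLen (hcell hc ht₃) (hcell hb ht₂)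
  have e₁ := abs_sub_sub_mul_cellLen_le ht₃ ht₁
  have e₂ := abs_sub_sub_mul_cellLen_le ht₃ ht₂
  rw [cellLen_eq_mul_cellLen_succ] at d₁ d₂
  set u := R.cellLen (p.length + 1)
  have hu : 0 < u := R.cellLen_pos _
  have h3 : (3 : ℝ) ≤ |(a : ℝ) + b - 2 * c| := by
    exact_mod_cast three_le_abs_add_sub_two_mul_of_mem_digits ha hb hc habc
  have hmargin : u ≤ |t₁ + t₂ - 2 * t₃| := by
    have h3u : 3 * u ≤ |((a : ℝ) + b - 2 * c) * u| := by
      rw [abs_mul, abs_of_pos hu]; nlinarith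
    have hsum := abs_add_le ((t₁ - t₃) - ((a : ℝ) - c) * u) ((t₂ - t₃) - ((b : ℝ) - c) * u)
    have htri := abs_sub_abs_le_abs_sub (((a : ℝ) + b - 2 * c) * u) (t₁ + t₂ - 2 * t₃)
    rw [abs_sub_comm (((a : ℝ) + b - 2 * c) * u)] at htri
    rw [show (t₁ - t₃) - ((a : ℝ) - c) * u + ((t₂ - t₃) - ((b : ℝ) - c) * u) =
      t₁ + t₂ - 2 * t₃ - ((a : ℝ) + b - 2 * c) * u by ring] at hsum
    linarith
  linarith

theorem norm_sub_le_mul_abs_sub {E : Type*} [SeminormedAddCommGroup E] {ψ : ℝ → E} {η : ℝ}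
    (hη : 0 ≤ η) (hψ : ∀ a ∈ R.A, ∀ z, |z - a| ≤ R.len → ‖ψ z - ψ a‖ ≤ η * |z - a|) {x y : ℝ}
    (hx : x ∈ R.cantorSet) (hy : y ∈ R.cantorSet) : ‖ψ x - ψ y‖ ≤ 65536 * η * |x - y| := by
  rcases eq_or_ne x y with rfl | hxy
  · simp
  obtain ⟨p, hp, i, hi, j, hj, hij, hxi, hyj⟩ := exists_cons_mem_cell₂ hx hy hxy
  obtain ⟨a, haA, hap⟩ := nonempty_of_measure_ne_zero hp.volume_ne_zero
  have hxa := abs_sub_le_cellLen (cell_cons_subset (lt_of_mem_digits hi) p hxi) hap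
  have hya := abs_sub_le_cellLen (cell_cons_subset (lt_of_mem_digits hj) p hyj) hap
  have hlen : R.cellLen p.length = 65536 * R.cellLen (p.length + 1) :=
    cellLen_eq_mul_cellLen_succ _
  have hgap := two_mul_cellLen_le_abs_sub hi hj hij hxi hyj
  have hx' := hψ a haA x (hxa.trans (cellLen_le_len _))
  have hy' := hψ a haA y (hya.trans (cellLen_le_len _))
  calc ‖ψ x - ψ y‖ ≤ ‖ψ x - ψ a‖ + ‖ψ y - ψ a‖ := by
        simpa only [dist_eq_norm] using dist_triangle_right (ψ x) (ψ y) (ψ a)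
    _ ≤ η * |x - a| + η * |y - a| := add_le_add hx' hy'
    _ ≤ η * (2 * R.cellLen p.length) := by nlinarith
    _ ≤ 65536 * η * |x - y| := by rw [hlen]; nlinarith

variable (R) in
def weight : List ℕ → ℝ
  | [] => 1
  | i :: p => weight p * R.mass (i :: p) / R.digitsMass p

variable (R) in
/-- The total weight of the alive cells of the same depth to the left of the cell. -/
def offset : List ℕ → ℝ
  | [] => 0
  | i :: p => offset p + ∑ j ∈ R.digits p with j < i, R.weight (j :: p)

theorem weight_nonneg : ∀ p : List ℕ, 0 ≤ R.weight p
  | [] => zero_le_one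
  | _ :: p => div_nonneg (mul_nonneg (weight_nonneg p) (mass_nonneg _)) (digitsMass_nonneg p)

theorem IsAlive.digitsMass_pos {p : List ℕ} (hp : R.IsAlive p) : 0 < R.digitsMass p := by
  linarith [hp.mass_pos, mass_le_mul_digitsMass (R := R) p]

theorem IsAlive.sum_weight_cons {p : List ℕ} (hp : R.IsAlive p) :
    ∑ i ∈ R.digits p, R.weight (i :: p) = R.weight p := by
  simp only [weight, ← Finset.sum_div, ← Finset.mul_sum]
  exact mul_div_cancel_right₀ _ hp.digitsMass_pos.ne'

theorem sqrt_cellLen (k : ℕ) : √(R.cellLen k) = √R.len / 256 ^ k := by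
  rw [cellLen, show (65536 : ℝ) ^ k = (256 ^ k) ^ 2 by rw [← pow_mul, mul_comm, pow_mul]; norm_num,
    Real.sqrt_div' _ (by positivity), Real.sqrt_sq (by positivity)]

theorem IsAlive.weight_mul_mass_nil_le {p : List ℕ} (hp : R.IsAlive p) :
    R.weight p * R.mass [] ≤ R.mass p * 256 ^ p.length := by
  induction p with
  | nil => simp [weight]
  | cons i p ih =>
    have hS := hp.2.digitsMass_pos
    have hmass := mass_le_mul_digitsMass (R := R) p
    calc R.weight (i :: p) * R.mass []
        = R.weight p * R.mass [] * R.mass (i :: p) / R.digitsMass p := by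
          rw [weight]; ring
      _ ≤ R.mass p * 256 ^ p.length * R.mass (i :: p) / R.digitsMass p :=
          div_le_div_of_nonneg_right (mul_le_mul_of_nonneg_right (ih hp.2) (mass_nonneg _)) hS.le
      _ ≤ 256 * R.digitsMass p * 256 ^ p.length * R.mass (i :: p) / R.digitsMass p :=
          div_le_div_of_nonneg_right (mul_le_mul_of_nonneg_right
            (mul_le_mul_of_nonneg_right hmass (by positivity)) (mass_nonneg _)) hS.le
      _ = R.mass (i :: p) * 256 ^ (i :: p).length := by
          rw [List.length_cons, pow_succ]; field_simp

theorem IsAlive.weight_le {p : List ℕ} (hp : R.IsAlive p) :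
    R.weight p ≤ √R.len / R.mass [] * √(R.cellLen p.length) := by
  have hm₀ : 0 < R.mass [] := IsAlive.mass_pos (p := []) trivial
  rw [sqrt_cellLen, div_mul_div_comm, ← sq, Real.sq_sqrt R.len_pos.le, le_div_iff₀ (by positivity)]
  calc R.weight p * (R.mass [] * 256 ^ p.length) = R.weight p * R.mass [] * 256 ^ p.length := by
        ring
    _ ≤ R.mass p * 256 ^ p.length * 256 ^ p.length :=
        mul_le_mul_of_nonneg_right hp.weight_mul_mass_nil_le (by positivity)
    _ ≤ R.cellLen p.length * 256 ^ p.length * 256 ^ p.length := by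
        gcongr; exact mass_le_cellLen p
    _ = R.len := by
      rw [cellLen, mul_assoc, ← mul_pow, show (256 : ℝ) * 256 = 65536 by norm_num]
      field_simp

theorem offset_le_offset_cons (i : ℕ) (p : List ℕ) : R.offset p ≤ R.offset (i :: p) :=
  le_add_of_nonneg_right (Finset.sum_nonneg fun _ _ => weight_nonneg _)

theorem IsAlive.offset_cons_add_weight_le {i : ℕ} {p : List ℕ} (hp : R.IsAlive p)
    (hi : i ∈ R.digits p) :
    R.offset (i :: p) + R.weight (i :: p) ≤ R.offset p + R.weight p := by
  have hsub : insert i {j ∈ R.digits p | j < i} ⊆ R.digits p :=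
    Finset.insert_subset hi (Finset.filter_subset _ _)
  have := Finset.sum_le_sum_of_subset_of_nonneg (f := fun j => R.weight (j :: p)) hsub
    fun j _ _ => weight_nonneg (j :: p)
  rw [Finset.sum_insert (by simp), hp.sum_weight_cons] at this
  rw [offset]
  linarith

theorem IsAlive.exists_mem_Ico_offset_cons {p : List ℕ} (hp : R.IsAlive p) {y : ℝ}
    (hy : y ∈ Ico (R.offset p) (R.offset p + R.weight p)) :
    ∃ i ∈ R.digits p, y ∈ Ico (R.offset (i :: p)) (R.offset (i :: p) + R.weight (i :: p)) := by
  obtain ⟨i, hi, hyi⟩ := exists_mem_Ico_sum_filter_lt (R.digits p) (fun j => R.weight (j :: p))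
    (sub_nonneg.2 hy.1) (by rw [hp.sum_weight_cons]; linarith [hy.2])
  refine ⟨i, hi, ?_⟩
  rw [offset]
  constructor <;> linarith [hyi.1, hyi.2]

variable (R) in
def IsBranch (σ : ℕ → List ℕ) : Prop := σ 0 = [] ∧ ∀ k, ∃ i ∈ R.digits (σ k), σ (k + 1) = i :: σ k

section Branch

variable {σ : ℕ → List ℕ} (hσ : R.IsBranch σ)
include hσ

theorem IsBranch.length_isAlive (k : ℕ) : (σ k).length = k ∧ R.IsAlive (σ k) := by
  induction k with
  | zero => simp [hσ.1, IsAlive]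
  | succ k ih =>
    obtain ⟨i, hi, he⟩ := hσ.2 k
    rw [he]
    exact ⟨by simp [ih.1], hi, ih.2⟩

theorem IsBranch.mem_iInter_Icc_offset :
    ⨆ k, R.offset (σ k) ∈ ⋂ k, Icc (R.offset (σ k)) (R.offset (σ k) + R.weight (σ k)) := by
  refine Monotone.ciSup_mem_iInter_Icc_of_antitone (monotone_nat_of_le_succ fun k => ?_)
    (antitone_nat_of_succ_le fun k => ?_) fun k => le_add_of_nonneg_right (weight_nonneg _)
  all_goals obtain ⟨i, hi, he⟩ := hσ.2 k; rw [he]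
  · exact offset_le_offset_cons i _
  · exact (hσ.length_isAlive k).2.offset_cons_add_weight_le hi

theorem IsBranch.mem_iInter_cell : ⨆ k, R.cellLeft (σ k) ∈ ⋂ k, R.cell (σ k) :=
  ciSup_mem_iInter_Icc_of_antitone_Icc (antitone_nat_of_succ_le fun k => by
    obtain ⟨i, hi, he⟩ := hσ.2 k
    rw [he]
    exact cell_cons_subset (lt_of_mem_digits hi) _) fun k => by
      linarith [R.cellLen_pos (σ k).length]

end Branch

theorem isBranch_address {x : ℝ} (hx : x ∈ R.cantorSet) : R.IsBranch (R.address x) :=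
  ⟨address_zero hx, address_succ hx⟩

variable (R) in
/-- The distribution function of the weights on the Cantor set. -/
def cantorMap (x : ℝ) : ℝ := ⨆ k, R.offset (R.address x k)

theorem cantorMap_mem_Icc {x : ℝ} (hx : x ∈ R.cantorSet) {p : List ℕ} (hp : R.IsAlive p)
    (hxp : x ∈ R.cell p) : R.cantorMap x ∈ Icc (R.offset p) (R.offset p + R.weight p) := by
  have := mem_iInter.1 (isBranch_address hx).mem_iInter_Icc_offset p.length
  rwa [address_eq hx hp hxp] at this

theorem abs_cantorMap_sub_le {x y : ℝ} (hx : x ∈ R.cantorSet) (hy : y ∈ R.cantorSet) :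
    |R.cantorMap x - R.cantorMap y| ≤ 256 * √R.len / R.mass [] * √|x - y| := by
  rcases eq_or_ne x y with rfl | hxy
  · simp
  obtain ⟨p, hp, i, hi, j, hj, hij, hxi, hyj⟩ := exists_cons_mem_cell₂ hx hy hxy
  have hfx := cantorMap_mem_Icc hx hp (cell_cons_subset (lt_of_mem_digits hi) p hxi)
  have hfy := cantorMap_mem_Icc hy hp (cell_cons_subset (lt_of_mem_digits hj) p hyj)
  have hgap := two_mul_cellLen_le_abs_sub hi hj hij hxi hyj
  have hu := R.cellLen_pos (p.length + 1)
  have hm₀ : 0 < R.mass [] := IsAlive.mass_pos (p := []) trivial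
  calc |R.cantorMap x - R.cantorMap y| ≤ R.weight p :=
        abs_sub_le_iff.2 ⟨by linarith [hfx.2, hfy.1], by linarith [hfx.1, hfy.2]⟩
    _ ≤ √R.len / R.mass [] * √(R.cellLen p.length) := hp.weight_le
    _ = 256 * √R.len / R.mass [] * √(R.cellLen (p.length + 1)) := by
        rw [sqrt_cellLen, sqrt_cellLen, pow_succ]; field_simp
    _ ≤ 256 * √R.len / R.mass [] * √|x - y| := by
        gcongr; linarith

theorem exists_forall_weight_lt {ε : ℝ} (hε : 0 < ε) :
    ∃ k, ∀ p, R.IsAlive p → p.length = k → R.weight p < ε := by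
  have hm₀ : 0 < R.mass [] := IsAlive.mass_pos (p := []) trivial
  have hlen := Real.sqrt_pos.2 R.len_pos
  obtain ⟨k, hk⟩ := R.exists_cellLen_lt (d := (ε * R.mass [] / √R.len) ^ 2) (by positivity)
  refine ⟨k, fun p hp hpk => hp.weight_le.trans_lt ?_⟩
  have hsqrt := (Real.sqrt_lt' (by positivity)).2 hk
  rw [hpk, div_mul_eq_mul_div, div_lt_iff₀ hm₀]
  rw [lt_div_iff₀ hlen] at hsqrt
  linarith

theorem exists_isBranch_mem_Ico {y : ℝ} (hy : y ∈ Ico (0 : ℝ) 1) : ∃ σ, R.IsBranch σ ∧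
    ∀ k, y ∈ Ico (R.offset (σ k)) (R.offset (σ k) + R.weight (σ k)) := by
  classical
  let next (p : List ℕ) : List ℕ :=
    if h : ∃ i ∈ R.digits p, y ∈ Ico (R.offset (i :: p)) (R.offset (i :: p) + R.weight (i :: p))
    then h.choose :: p else p
  have hnext : ∀ k, R.IsAlive (next^[k] []) ∧
      y ∈ Ico (R.offset (next^[k] [])) (R.offset (next^[k] []) + R.weight (next^[k] [])) := by
    intro k
    induction k with
    | zero => simpa [offset, weight, IsAlive] using hy
    | succ k ih =>
      have h := ih.1.exists_mem_Ico_offset_cons ih.2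
      simp only [Function.iterate_succ_apply', next, dif_pos h]
      exact ⟨⟨h.choose_spec.1, ih.1⟩, h.choose_spec.2⟩
  refine ⟨fun k => next^[k] [], ⟨rfl, fun k => ?_⟩, fun k => (hnext k).2⟩
  have h := (hnext k).1.exists_mem_Ico_offset_cons (hnext k).2
  refine ⟨h.choose, h.choose_spec.1, ?_⟩
  simp only [Function.iterate_succ_apply', next, dif_pos h]

theorem exists_cantorMap_eq {y : ℝ} (hy : y ∈ Ico (0 : ℝ) 1) :
    ∃ x ∈ R.cantorSet, R.cantorMap x = y := by
  obtain ⟨σ, hσ, hyσ⟩ := exists_isBranch_mem_Ico hy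
  obtain ⟨x, hx⟩ : ∃ x, ∀ k, x ∈ R.cell (σ k) := ⟨_, mem_iInter.1 hσ.mem_iInter_cell⟩
  have hxX : x ∈ R.cantorSet := fun k =>
    ⟨σ k, (hσ.length_isAlive k).1, (hσ.length_isAlive k).2, hx k⟩
  refine ⟨x, hxX, eq_of_forall_dist_le fun ε hε => ?_⟩
  obtain ⟨k, hk⟩ := exists_forall_weight_lt (R := R) hε
  have hfx := cantorMap_mem_Icc hxX (hσ.length_isAlive k).2 (hx k)
  have hwk := hk _ (hσ.length_isAlive k).2 (hσ.length_isAlive k).1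
  rw [Real.dist_eq, abs_sub_le_iff]
  constructor <;> linarith [hfx.1, hfx.2, (hyσ k).1, (hyσ k).2]

theorem half_le_dimH_cantorSet : ENNReal.ofReal (1 / 2) ≤ dimH R.cantorSet := by
  have hC : 0 ≤ 256 * √R.len / R.mass [] := by
    have := IsAlive.mass_pos (R := R) (p := []) trivial
    positivity
  have hholder : HolderOnWith (256 * √R.len / R.mass []).toNNReal (1 / 2) R.cantorMap
      R.cantorSet := holderOnWith_of_dist_le fun x hx y hy => by
    rw [Real.coe_toNNReal _ hC, Real.dist_eq, Real.dist_eq, NNReal.coe_div, NNReal.coe_one,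
      NNReal.coe_ofNat, ← Real.sqrt_eq_rpow]
    exact abs_cantorMap_sub_le hx hy
  simpa using le_dimH_of_holderOnWith_of_Ico_subset_image (by norm_num) hholder
    fun y hy => exists_cantorMap_eq hy

theorem sq_add_norm_sq_ne {E : Type*} [NormedAddCommGroup E] [InnerProductSpace ℝ E]
    {φ : ℝ → E} {v : E} {η : ℝ} (hη : 0 ≤ η)
    (hφ : ∀ a ∈ R.A, ∀ z, |z - a| ≤ R.len → ‖φ z - φ a - (z - a) • v‖ ≤ η * |z - a|)
    (hsmall : 131072 * (65536 * η) * (2 * ‖v‖ + 65536 * η) < 1) {t₁ t₂ t₃ : ℝ}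
    (h₁ : t₁ ∈ R.cantorSet) (h₂ : t₂ ∈ R.cantorSet) (h₃ : t₃ ∈ R.cantorSet) (h₁₂ : t₁ ≠ t₂) :
    (t₃ - t₁) ^ 2 + ‖φ t₃ - φ t₁‖ ^ 2 ≠ (t₃ - t₂) ^ 2 + ‖φ t₃ - φ t₂‖ ^ 2 := by
  intro heq
  set ψ : ℝ → E := fun t => φ t - t • v
  have hψ : ∀ s t, ψ s - ψ t = φ s - φ t - (s - t) • v := fun s t => by
    simp only [ψ, sub_smul]; abel
  have hlip : ∀ {x y}, x ∈ R.cantorSet → y ∈ R.cantorSet →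
      ‖ψ x - ψ y‖ ≤ 65536 * η * |x - y| := fun hx hy =>
    norm_sub_le_mul_abs_sub hη (fun a ha z hz => (hψ z a).symm ▸ hφ a ha z hz) hx hy
  have hφψ : ∀ s t, φ s - φ t = (s - t) • v + (ψ s - ψ t) := fun s t => by rw [hψ]; abel
  rw [hφψ, hφψ] at heq
  have hiso := abs_add_le_of_sq_add_norm_sq_eq (hlip h₃ h₁) (hlip h₃ h₂)
    (by rw [sub_sub_sub_cancel_left, sub_sub_sub_cancel_left]; exact hlip h₂ h₁)
    (fun h => h₁₂ (by linarith)) heq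
  have hmargin := abs_sub_add_abs_sub_le_mul_abs h₁ h₂ h₃ h₁₂
  rw [show t₁ + t₂ - 2 * t₃ = -((t₃ - t₁) + (t₃ - t₂)) by ring, abs_neg] at hmargin
  have hD : 0 < |t₃ - t₁| + |t₃ - t₂| := by
    have := abs_sub_le t₂ t₃ t₁
    rw [abs_sub_comm t₂ t₃] at this
    linarith [abs_pos.2 (sub_ne_zero.2 h₁₂.symm)]
  nlinarith [mul_lt_mul_of_pos_right hsmall hD]

end RootCell

theorem exists_forall_norm_sub_sub_smul_le {E : Type*} [NormedAddCommGroup E] [NormedSpace ℝ E]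
    {φ : ℝ → E} {a : ℝ} {v : E} {η : ℝ} (hφ : DifferentiableAt ℝ φ a) (hv : ‖deriv φ a - v‖ < η) :
    ∃ δ > 0, ∀ z, |z - a| ≤ δ → ‖φ z - φ a - (z - a) • v‖ ≤ η * |z - a| := by
  have hc : 0 < η - ‖deriv φ a - v‖ := sub_pos.2 hv
  obtain ⟨ε, hε, hball⟩ := Metric.eventually_nhds_iff.1
    ((hasDerivAt_iff_isLittleO.1 hφ.hasDerivAt).def hc)
  refine ⟨ε / 2, half_pos hε, fun z hz => ?_⟩
  have h₁ := hball (show dist z a < ε by rw [Real.dist_eq]; linarith)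
  rw [Real.norm_eq_abs] at h₁
  calc ‖φ z - φ a - (z - a) • v‖
      = ‖(φ z - φ a - (z - a) • deriv φ a) + (z - a) • (deriv φ a - v)‖ := by
        rw [smul_sub]; abel_nf
    _ ≤ (η - ‖deriv φ a - v‖) * |z - a| + |z - a| * ‖deriv φ a - v‖ := by
        refine (norm_add_le _ _).trans (add_le_add h₁ ?_)
        rw [norm_smul, Real.norm_eq_abs]
    _ = η * |z - a| := by ring

theorem exists_uniform_slope {E : Type*} [NormedAddCommGroup E] [NormedSpace ℝ E]
    [TopologicalSpace.SeparableSpace E] {φ : ℝ → E} {S : Set ℝ} (hS : volume S ≠ 0)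
    (hφ : ∀ x ∈ S, DifferentiableAt ℝ φ x) {η : ℝ} (hη : 0 < η) :
    ∃ x₀ ∈ S, ∃ A ⊆ S, volume A ≠ 0 ∧ ∃ n : ℕ, ∀ a ∈ A, ∀ z, |z - a| ≤ 1 / (n + 1) →
      ‖φ z - φ a - (z - a) • deriv φ x₀‖ ≤ η * |z - a| := by
  obtain ⟨x₀, hx₀, hS'⟩ := exists_measure_ne_zero_dist_lt (deriv φ) hS hη
  have hcover : {x ∈ S | dist (deriv φ x) (deriv φ x₀) < η} ⊆ ⋃ n ∈ (univ : Set ℕ),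
      {a | ∀ z, |z - a| ≤ 1 / (n + 1) → ‖φ z - φ a - (z - a) • deriv φ x₀‖ ≤ η * |z - a|} := by
    rintro a ⟨haS, ha⟩
    obtain ⟨δ, hδ, hslope⟩ :=
      exists_forall_norm_sub_sub_smul_le (hφ a haS) (by rwa [← dist_eq_norm])
    obtain ⟨n, hn⟩ := exists_nat_one_div_lt hδ
    exact mem_iUnion₂.2 ⟨n, mem_univ n, fun z hz => hslope z (hz.trans hn.le)⟩
  obtain ⟨n, -, hn⟩ := exists_measure_inter_ne_zero_of_subset_biUnion countable_univ hS' hcover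
  exact ⟨x₀, hx₀, _, fun a ha => ha.1.1, hn, n, fun a ha => ha.2⟩

theorem exists_Icc_subset_Icc_measure_inter_ne_zero {A : Set ℝ} (hA : A ⊆ Icc 0 1)
    (hA₀ : volume A ≠ 0) (n : ℕ) : ∃ a₀ : ℝ, Icc a₀ (a₀ + 1 / (n + 1)) ⊆ Icc 0 1 ∧
      volume (A ∩ Icc a₀ (a₀ + 1 / (n + 1))) ≠ 0 := by
  have hcover := Icc_subset_biUnion_Icc 0 (1 / (n + 1)) n
  rw [zero_add, mul_one_div_cancel (by positivity)] at hcover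
  obtain ⟨i, hi, hne⟩ := exists_measure_inter_ne_zero_of_subset_biUnion (Finset.countable_toSet _)
    hA₀ (hA.trans hcover)
  refine ⟨i * (1 / (n + 1)), Icc_subset_Icc (by positivity) ?_, by simpa using hne⟩
  rw [← add_one_mul, mul_one_div, div_le_one (by positivity)]
  exact_mod_cast Finset.mem_range.1 hi

theorem volume_setOf_differentiableAt_ne_zero {E : Type*} [NormedAddCommGroup E]
    [NormedSpace ℝ E] [FiniteDimensional ℝ E] {g : ℝ → E} {K : ℝ≥0}
    (hg : LipschitzOnWith K g (Icc 0 1)) :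
    volume {x ∈ Ioo (0 : ℝ) 1 | DifferentiableAt ℝ g x} ≠ 0 := by
  have hae := (hg.mono Ioo_subset_Icc_self).ae_differentiableWithinAt_of_mem_real
  intro h0
  refine (by simp [Real.volume_Ioo] : volume (Ioo (0 : ℝ) 1) ≠ 0)
    (measure_mono_null (fun x hx => ?_) (measure_union_null h0 (ae_iff.1 hae)))
  by_cases hd : DifferentiableWithinAt ℝ g (Ioo 0 1) x
  · exact Or.inl ⟨hx, hd.differentiableAt (isOpen_Ioo.mem_nhds hx)⟩
  · exact Or.inr fun h => hd (h hx)

theorem graphPoint_norm_sub_sq {m : ℕ} (g : ℝ → EuclideanSpace ℝ (Fin m)) (s t : ℝ) :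
    ‖graphPoint g s - graphPoint g t‖ ^ 2 = (s - t) ^ 2 + ‖g s - g t‖ ^ 2 := by
  rw [EuclideanSpace.norm_sq_eq, EuclideanSpace.norm_sq_eq, Fin.sum_univ_succ]
  simp [graphPoint, sq_abs]

theorem lipschitz_graph_isosceles_general (m : ℕ)
    (g : ℝ → EuclideanSpace ℝ (Fin m)) (K : NNReal)
    (hg : LipschitzOnWith K g (Set.Icc 0 1)) :
    ∃ X : Set ℝ, X ⊆ Set.Icc 0 1 ∧
      ENNReal.ofReal (1 / 2) ≤ dimH X ∧
      ∀ t₁ ∈ X, ∀ t₂ ∈ X, ∀ t₃ ∈ X, t₁ ≠ t₂ → t₁ ≠ t₃ → t₂ ≠ t₃ →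
        ‖graphPoint g t₃ - graphPoint g t₁‖ ≠ ‖graphPoint g t₃ - graphPoint g t₂‖ := by
  have hK : (0 : ℝ) ≤ K := K.2
  obtain ⟨η, hη, hsmall⟩ : ∃ η : ℝ, 0 < η ∧ 131072 * (65536 * η) * (2 * K + 65536 * η) < 1 := by
    refine ⟨1 / (2 ^ 34 * (K + 1)), by positivity, ?_⟩
    field_simp
    nlinarith
  obtain ⟨x₀, hx₀, A, hAS, hA, n, hslope⟩ :=
    exists_uniform_slope (volume_setOf_differentiableAt_ne_zero hg) (fun x hx => hx.2) hη
  have hv : ‖deriv g x₀‖ ≤ K := norm_deriv_le_of_lipschitzOn (Icc_mem_nhds hx₀.1.1 hx₀.1.2) hg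
  obtain ⟨a₀, hroot, hmass⟩ := exists_Icc_subset_Icc_measure_inter_ne_zero
    (hAS.trans fun x hx => Ioo_subset_Icc_self hx.1) hA n
  let R : RootCell := ⟨A, a₀, 1 / (n + 1), by positivity, hmass⟩
  refine ⟨R.cantorSet, R.cantorSet_subset.trans hroot, R.half_le_dimH_cantorSet, ?_⟩
  intro t₁ h₁ t₂ h₂ t₃ h₃ h₁₂ _ _ heq
  refine R.sq_add_norm_sq_ne hη.le hslope (lt_of_le_of_lt (by gcongr) hsmall) h₁ h₂ h₃ h₁₂ ?_
  rw [← graphPoint_norm_sub_sq, ← graphPoint_norm_sub_sq, heq]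

/-- **Theorem 5.2.** A Lipschitz graph in `ℝ^n` (here `n = m + 1 ≥ 2`) contains a set of
Hausdorff dimension `1/2` with no vertices of an isosceles triangle. -/
theorem lipschitz_graph_isosceles (m : ℕ) (hm : 1 ≤ m)
    (g : ℝ → EuclideanSpace ℝ (Fin m)) (K : NNReal)
    (hg : LipschitzOnWith K g (Set.Icc 0 1)) :
    ∃ X : Set ℝ, X ⊆ Set.Icc 0 1 ∧
      ENNReal.ofReal (1 / 2) ≤ dimH X ∧
      ∀ t₁ ∈ X, ∀ t₂ ∈ X, ∀ t₃ ∈ X, t₁ ≠ t₂ → t₁ ≠ t₃ → t₂ ≠ t₃ →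
        ‖graphPoint g t₃ - graphPoint g t₁‖ ≠ ‖graphPoint g t₃ - graphPoint g t₂‖ :=
  lipschitz_graph_isosceles_general m g K hg
end
end
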